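/- arXiv:2105.00857 — 6 statements merged into one kernel-verified Lean document; each statement's English description precedes it below -/
import Mathlib

section
/- If X and Y are disjoint connected vertex sets of a graph G with at least c edges crossing X and Y, then one can extend X and Y to a bipartition {X', Y'} of the connected component containing X ∪ Y, with X ⊆ X', Y ⊆ Y', such that both X' and Y' are connected; consequently the cut between X' and Y' has size at least c. -/
open Finset

attribute [local instance] Classical.propDecidable

/-- A finite loopless multigraph on vertex set `V`. -/
structure Multigraph (V : Type) where
  E : Type
  [fintE : Fintype E]
  ends : E → Sym2 V
  loopless : ∀ e, ¬ (ends e).IsDiag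

attribute [instance] Multigraph.fintE

namespace Multigraph

variable {V : Type} [Fintype V] [DecidableEq V] (G : Multigraph V)

/-- The set of edges with one endpoint in `X` and the other in `Y`. -/
noncomputable def crossing (X Y : Finset V) : Finset G.E :=
  Finset.univ.filter (fun e => ∃ x ∈ X, ∃ y ∈ Y, G.ends e = s(x, y))

/-- The set of edges with both endpoints in `S`. -/
noncomputable def inside (S : Finset V) : Finset G.E :=
  Finset.univ.filter (fun e => ∀ v ∈ G.ends e, v ∈ S)

/-- Adjacency between two vertices. -/
def AdjV (x y : V) : Prop := ∃ e : G.E, G.ends e = s(x, y)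

/-- Adjacency within a vertex subset. -/
def AdjOn (S : Finset V) (x y : V) : Prop := x ∈ S ∧ y ∈ S ∧ G.AdjV x y

/-- A vertex set is connected if it is nonempty and any two of its vertices are
joined by a path inside the set. -/
def ConnectedSet (S : Finset V) : Prop :=
  S.Nonempty ∧ ∀ x ∈ S, ∀ y ∈ S, Relation.ReflTransGen (G.AdjOn S) x y

/-- A θ_c-model: two disjoint connected vertex sets crossed by at least `c` edges. -/
def ThetaModel (c : ℕ) (X Y : Finset V) : Prop :=
  Disjoint X Y ∧ G.ConnectedSet X ∧ G.ConnectedSet Y ∧ c ≤ (G.crossing X Y).card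

/-- `G` contains θ_c as a minor. -/
def HasThetaMinor (c : ℕ) : Prop := ∃ X Y, G.ThetaModel c X Y

/-- A cut: the set of edges crossing some vertex bipartition. -/
def IsCut (F : Finset G.E) : Prop := ∃ A : Finset V, F = G.crossing A Aᶜ

/-- A bond: a minimal nonempty cut. -/
def IsBond (F : Finset G.E) : Prop :=
  G.IsCut F ∧ F.Nonempty ∧ ∀ F' ⊂ F, F'.Nonempty → ¬ G.IsCut F'

/-- Edge-degree of a vertex: number of incident edges (with multiplicity). -/
noncomputable def edeg (v : V) : ℕ :=
  (Finset.univ.filter (fun e : G.E => v ∈ G.ends e)).card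

/-- The multiplicity of the (multi-)edge between `x` and `y`. -/
noncomputable def mult (x y : V) : ℕ :=
  (Finset.univ.filter (fun e : G.E => G.ends e = s(x, y))).card

/-- The set of neighbours of a vertex. -/
noncomputable def nbrs (v : V) : Finset V := Finset.univ.filter (fun u => G.AdjV v u)

/-- The induced subgraph on a vertex subset (kept on the same vertex type;
only edges with both endpoints in `S` survive). -/
noncomputable def induce (S : Finset V) : Multigraph V where
  E := {e : G.E // ∀ v ∈ G.ends e, v ∈ S}
  ends e := G.ends e.1
  loopless e := G.loopless e.1

/-- `S` is a c-bond cover: `G - S` is θ_c-minor-free. -/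
def CBondCover (c : ℕ) (S : Finset V) : Prop :=
  ¬ (G.induce Sᶜ).HasThetaMinor c

/-- The graph `K^{(u,v)}`: the induced subgraph on `K ∪ {u,v}` with all
`u`-`v` edges removed. -/
noncomputable def outK (K : Finset V) (u v : V) : Multigraph V where
  E := {e : G.E // (∀ x ∈ G.ends e, x ∈ insert u (insert v K)) ∧ G.ends e ≠ s(u, v)}
  ends e := G.ends e.1
  loopless e := G.loopless e.1

/-- Add `i` parallel edges between the distinct vertices `u` and `v`. -/
noncomputable def addPar (u v : V) (huv : u ≠ v) (i : ℕ) : Multigraph V where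
  E := G.E ⊕ Fin i
  ends := Sum.elim G.ends (fun _ => s(u, v))
  loopless := by
    rintro (e | e)
    · exact G.loopless e
    · simpa using huv

/-- A cluster collection: a nonempty collection of pairwise disjoint,
nonempty, connected vertex subsets. -/
def ClusterCollection (𝒞 : Finset (Finset V)) : Prop :=
  𝒞.Nonempty ∧ (∀ C ∈ 𝒞, C.Nonempty ∧ G.ConnectedSet C) ∧
    (∀ C ∈ 𝒞, ∀ D ∈ 𝒞, C ≠ D → Disjoint C D)

/-- The edges of `G` that are not internal to any cluster of `𝒞`;
these are exactly the edges surviving in `G/𝒞` when `𝒞` is a cluster partition. -/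
noncomputable def interE (𝒞 : Finset (Finset V)) : Finset G.E :=
  Finset.univ.filter (fun e => ¬ ∃ C ∈ 𝒞, ∀ v ∈ G.ends e, v ∈ C)

/-- A c-outgrowth `(K, u, v)` of `G`. -/
def IsOutgrowth (c : ℕ) (K : Finset V) (u v : V) : Prop :=
  u ≠ v ∧ u ∉ K ∧ v ∉ K ∧ K.Nonempty ∧
  (G.induce (Finset.univ \ {u, v})).ConnectedSet K ∧
  (∀ x ∈ K, ∀ y, G.AdjV x y → y ∈ K ∨ y = u ∨ y = v) ∧
  (∃ x ∈ K, G.AdjV x u) ∧ (∃ x ∈ K, G.AdjV x v) ∧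
  ¬ (G.outK K u v).HasThetaMinor c

end Multigraph

section Helpers

open Multigraph

variable {V : Type} [Fintype V] [DecidableEq V] (G : Multigraph V)

lemma adjV_symm {x y : V} (h : G.AdjV x y) : G.AdjV y x := by
  obtain ⟨e, he⟩ := h
  exact ⟨e, by rw [he, Sym2.eq_swap]⟩

lemma connectedSet_insert {S : Finset V} (hS : G.ConnectedSet S) {w v : V}
    (hw : w ∈ S) (hadj : G.AdjV w v) : G.ConnectedSet (insert v S) := by
  have hmono : ∀ a ∈ S, ∀ b ∈ S,
      Relation.ReflTransGen (G.AdjOn (insert v S)) a b := by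
    intro a ha b hb
    exact Relation.ReflTransGen.mono (fun x y (h : G.AdjOn S x y) =>
      (⟨Finset.mem_insert_of_mem h.1, Finset.mem_insert_of_mem h.2.1, h.2.2⟩ : G.AdjOn (insert v S) x y)) _ _ (hS.2 a ha b hb)
  have hvb : ∀ b ∈ S, Relation.ReflTransGen (G.AdjOn (insert v S)) v b := by
    intro b hb
    exact Relation.ReflTransGen.head
      ⟨Finset.mem_insert_self _ _, Finset.mem_insert_of_mem hw, adjV_symm G hadj⟩
      (hmono w hw b hb)
  have hbv : ∀ b ∈ S, Relation.ReflTransGen (G.AdjOn (insert v S)) b v := by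
    intro b hb
    exact Relation.ReflTransGen.tail (hmono b hb w hw)
      ⟨Finset.mem_insert_of_mem hw, Finset.mem_insert_self _ _, hadj⟩
  refine ⟨⟨v, Finset.mem_insert_self _ _⟩, ?_⟩
  intro x hx y hy
  rcases Finset.mem_insert.1 hx with rfl | hx
  · rcases Finset.mem_insert.1 hy with rfl | hy
    · exact Relation.ReflTransGen.refl
    · exact hvb y hy
  · rcases Finset.mem_insert.1 hy with h | hy
    · rw [h]; exact hbv x hx
    · exact hmono x hx y hy

lemma crossing_mono {X Y X' Y' : Finset V} (hX : X ⊆ X') (hY : Y ⊆ Y') :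
    G.crossing X Y ⊆ G.crossing X' Y' := by
  intro e he
  simp only [Multigraph.crossing, Finset.mem_filter, Finset.mem_univ, true_and] at he ⊢
  obtain ⟨x, hx, y, hy, hxy⟩ := he
  exact ⟨x, hX hx, y, hY hy, hxy⟩

end Helpers

/-- Disjoint connected sets X, Y crossed by at least c edges extend to
a bipartition {X', Y'} of the connected component containing X ∪ Y, with both sides
connected; the cut between X' and Y' then has at least c edges. -/
theorem extend_theta_model_to_component {V : Type} [Fintype V] [DecidableEq V]
    (G : Multigraph V) (c : ℕ) (hc : 0 < c) (X Y : Finset V)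
    (hdisj : Disjoint X Y) (hX : G.ConnectedSet X) (hY : G.ConnectedSet Y)
    (hcr : c ≤ (G.crossing X Y).card) :
    ∃ X' Y' : Finset V, X ⊆ X' ∧ Y ⊆ Y' ∧ Disjoint X' Y' ∧
      G.ConnectedSet X' ∧ G.ConnectedSet Y' ∧
      X' ∪ Y' =
        Finset.univ.filter (fun v => ∃ u ∈ X ∪ Y, Relation.ReflTransGen G.AdjV u v) ∧
      c ≤ (G.crossing X' Y').card := by
  classical
  set P : Finset V × Finset V → Prop := fun p =>
    X ⊆ p.1 ∧ Y ⊆ p.2 ∧ Disjoint p.1 p.2 ∧ G.ConnectedSet p.1 ∧ G.ConnectedSet p.2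
    with hP
  have hmem : (X, Y) ∈ Finset.univ.filter P := by
    simp only [Finset.mem_filter, Finset.mem_univ, true_and, hP]
    exact ⟨subset_rfl, subset_rfl, hdisj, hX, hY⟩
  obtain ⟨p, hpmem, hmax⟩ := Finset.exists_max_image (Finset.univ.filter P)
    (fun p => (p.1 ∪ p.2).card) ⟨(X, Y), hmem⟩
  simp only [Finset.mem_filter, Finset.mem_univ, true_and, hP] at hpmem
  obtain ⟨hXp, hYp, hdisj', hCX, hCY⟩ := hpmem
  -- closure of p.1 ∪ p.2 under adjacency
  have hclosed : ∀ b ∈ p.1 ∪ p.2, ∀ v, G.AdjV b v → v ∈ p.1 ∪ p.2 := by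
    intro b hb v hadj
    by_contra hv
    have hv1 : v ∉ p.1 := fun h => hv (Finset.mem_union_left _ h)
    have hv2 : v ∉ p.2 := fun h => hv (Finset.mem_union_right _ h)
    rcases Finset.mem_union.1 hb with hb1 | hb2
    · have hq : P (insert v p.1, p.2) := by
        refine ⟨hXp.trans (Finset.subset_insert _ _), hYp, ?_,
          connectedSet_insert G hCX hb1 hadj, hCY⟩
        rw [Finset.disjoint_insert_left]
        exact ⟨hv2, hdisj'⟩
      have := hmax (insert v p.1, p.2) (by simp [hP, hq.1, hq.2.1, hq.2.2.1, hq.2.2.2.1, hq.2.2.2.2])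
      simp only [Finset.insert_union] at this
      rw [Finset.card_insert_of_notMem hv] at this
      omega
    · have hq : P (p.1, insert v p.2) := by
        refine ⟨hXp, hYp.trans (Finset.subset_insert _ _), ?_,
          hCX, connectedSet_insert G hCY hb2 hadj⟩
        rw [Finset.disjoint_insert_right]
        exact ⟨hv1, hdisj'⟩
      have := hmax (p.1, insert v p.2) (by simp [hP, hq.1, hq.2.1, hq.2.2.1, hq.2.2.2.1, hq.2.2.2.2])
      simp only [Finset.union_insert] at this
      rw [Finset.card_insert_of_notMem hv] at this
      omega
  refine ⟨p.1, p.2, hXp, hYp, hdisj', hCX, hCY, ?_, hcr.trans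
    (Finset.card_le_card (crossing_mono G hXp hYp))⟩
  ext v
  simp only [Finset.mem_filter, Finset.mem_univ, true_and]
  constructor
  · intro hv
    rcases Finset.mem_union.1 hv with hv1 | hv2
    · obtain ⟨x₀, hx₀⟩ := hX.1
      refine ⟨x₀, Finset.mem_union_left _ hx₀, ?_⟩
      exact Relation.ReflTransGen.mono (fun a b (h : G.AdjOn p.1 a b) => h.2.2) _ _ (hCX.2 x₀ (hXp hx₀) v hv1)
    · obtain ⟨y₀, hy₀⟩ := hY.1
      refine ⟨y₀, Finset.mem_union_right _ hy₀, ?_⟩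
      exact Relation.ReflTransGen.mono (fun a b (h : G.AdjOn p.2 a b) => h.2.2) _ _ (hCY.2 y₀ (hYp hy₀) v hv2)
  · rintro ⟨u, hu, hreach⟩
    have hu' : u ∈ p.1 ∪ p.2 := by
      rcases Finset.mem_union.1 hu with h | h
      · exact Finset.mem_union_left _ (hXp h)
      · exact Finset.mem_union_right _ (hYp h)
    induction hreach with
    | refl => exact hu'
    | tail _ hbc ih => exact hclosed _ ih _ hbc
end

section
/- For every positive integer c, every θ_c-minor-free multigraph G satisfies |E(G)| ≤ 2c·|V(G)|. -/
open Finset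

attribute [local instance] Classical.propDecidable

namespace Multigraph

section Helpers

variable {V : Type} [Fintype V] [DecidableEq V] (G : Multigraph V)

lemma adjV_symm {x y : V} (h : G.AdjV x y) : G.AdjV y x := by
  obtain ⟨e, he⟩ := h
  exact ⟨e, he.trans (Sym2.eq_swap)⟩

lemma adjV_ne {x y : V} (h : G.AdjV x y) : x ≠ y := by
  obtain ⟨e, he⟩ := h
  intro hxy
  subst hxy
  exact G.loopless e (by rw [he]; exact Sym2.mk_isDiag_iff.mpr rfl)

lemma adjOn_symm (S : Finset V) : Symmetric (G.AdjOn S) :=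
  fun _ _ ⟨hx, hy, h⟩ => ⟨hy, hx, G.adjV_symm h⟩

lemma rtg_symm (S : Finset V) {x y : V} (h : Relation.ReflTransGen (G.AdjOn S) x y) :
    Relation.ReflTransGen (G.AdjOn S) y x :=
  haveI : Std.Symm (G.AdjOn S) := ⟨G.adjOn_symm S⟩
  Std.Symm.symm _ _ h

lemma adjOn_mono {S T : Finset V} (h : S ⊆ T) {x y : V} (hxy : G.AdjOn S x y) :
    G.AdjOn T x y :=
  ⟨h hxy.1, h hxy.2.1, hxy.2.2⟩

lemma rtg_mono {S T : Finset V} (h : S ⊆ T) {x y : V}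
    (hxy : Relation.ReflTransGen (G.AdjOn S) x y) :
    Relation.ReflTransGen (G.AdjOn T) x y :=
  Relation.ReflTransGen.mono (fun _ _ hab => G.adjOn_mono h hab) _ _ hxy

lemma rtg_mem {S : Finset V} {x y : V} (h : Relation.ReflTransGen (G.AdjOn S) x y) :
    x = y ∨ (x ∈ S ∧ y ∈ S) := by
  induction h with
  | refl => exact Or.inl rfl
  | tail _ hbc ih =>
    rcases ih with rfl | ⟨hx, _⟩
    · exact Or.inr ⟨hbc.1, hbc.2.1⟩
    · exact Or.inr ⟨hx, hbc.2.1⟩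

lemma connected_of_hub {S : Finset V} {a : V} (ha : a ∈ S)
    (h : ∀ x ∈ S, Relation.ReflTransGen (G.AdjOn S) a x) : G.ConnectedSet S :=
  ⟨⟨a, ha⟩, fun x hx y hy => (G.rtg_symm S (h x hx)).trans (h y hy)⟩

lemma connected_singleton (v : V) : G.ConnectedSet {v} := by
  refine ⟨⟨v, Finset.mem_singleton_self v⟩, fun x hx y hy => ?_⟩
  rw [Finset.mem_singleton] at hx hy
  subst hx; subst hy
  exact Relation.ReflTransGen.refl

lemma rtg_refine {S : Finset V} {a b : V} (h : Relation.ReflTransGen (G.AdjOn S) a b) :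
    Relation.ReflTransGen
      (G.AdjOn (S.filter (fun z => Relation.ReflTransGen (G.AdjOn S) a z))) a b := by
  induction h with
  | refl => exact Relation.ReflTransGen.refl
  | @tail b c hab hbc ih =>
    exact ih.tail ⟨Finset.mem_filter.mpr ⟨hbc.1, hab⟩,
      Finset.mem_filter.mpr ⟨hbc.2.1, hab.tail hbc⟩, hbc.2.2⟩

lemma connected_union {A B : Finset V} (hA : G.ConnectedSet A) (hB : G.ConnectedSet B)
    {a b : V} (ha : a ∈ A) (hb : b ∈ B) (hab : G.AdjV a b) :
    G.ConnectedSet (A ∪ B) := by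
  refine G.connected_of_hub (Finset.mem_union_left _ ha) (fun x hx => ?_)
  rcases Finset.mem_union.mp hx with hxA | hxB
  · exact G.rtg_mono Finset.subset_union_left (hA.2 a ha x hxA)
  · refine Relation.ReflTransGen.head
      ⟨Finset.mem_union_left _ ha, Finset.mem_union_right _ hb, hab⟩ ?_
    exact G.rtg_mono Finset.subset_union_right (hB.2 b hb x hxB)

/-- Exit lemma: from any vertex with a path to `w` inside `S`, either it is `w`,
or there is a path inside `S.erase w` to a vertex adjacent to `w`. -/
lemma exit_lemma {S : Finset V} {w z : V} (h : Relation.ReflTransGen (G.AdjOn S) z w) :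
    z = w ∨ ∃ t, Relation.ReflTransGen (G.AdjOn (S.erase w)) z t ∧ G.AdjV t w := by
  induction h using Relation.ReflTransGen.head_induction_on with
  | refl => exact Or.inl rfl
  | @head z z' hzz' _ ih =>
    by_cases hzw : z = w
    · exact Or.inl hzw
    right
    have hzS : z ∈ S.erase w := Finset.mem_erase.mpr ⟨hzw, hzz'.1⟩
    by_cases hz'w : z' = w
    · exact ⟨z, Relation.ReflTransGen.refl, hz'w ▸ hzz'.2.2⟩
    · rcases ih with rfl | ⟨t, hp, ht⟩
      · exact absurd rfl hz'w
      · exact ⟨t, Relation.ReflTransGen.head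
          ⟨hzS, Finset.mem_erase.mpr ⟨hz'w, hzz'.2.1⟩, hzz'.2.2⟩ hp, ht⟩

/-- Removable vertex: every connected set with at least two elements has, for any
prescribed `u`, a vertex `v ≠ u` whose removal keeps the set connected. -/
lemma removable : ∀ n : ℕ, ∀ S : Finset V, S.card ≤ n → G.ConnectedSet S →
    2 ≤ S.card → ∀ u ∈ S, ∃ v ∈ S, v ≠ u ∧ G.ConnectedSet (S.erase v) := by
  intro n
  induction n with
  | zero => intro S hS _ h2; exact absurd h2 (by omega)
  | succ n ih =>
    intro S hSn hS h2 u hu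
    have h1lt : 1 < S.card := by omega
    obtain ⟨w, hwS, hwu⟩ := Finset.exists_mem_ne h1lt u
    set S' := S.erase w with hS'def
    by_cases hconn : G.ConnectedSet S'
    · exact ⟨w, hwS, hwu, hconn⟩
    have huS' : u ∈ S' := Finset.mem_erase.mpr ⟨fun h => hwu h.symm, hu⟩
    -- find a vertex of S' not reachable from u within S'
    have hy' : ∃ y' ∈ S', ¬ Relation.ReflTransGen (G.AdjOn S') u y' := by
      by_contra hcon
      push_neg at hcon
      exact hconn (G.connected_of_hub huS' hcon)
    obtain ⟨y', hy'S', hy'nr⟩ := hy'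
    set C : Finset V := S'.filter (fun z => Relation.ReflTransGen (G.AdjOn S') y' z)
      with hCdef
    have hy'C : y' ∈ C := Finset.mem_filter.mpr ⟨hy'S', Relation.ReflTransGen.refl⟩
    have huC : u ∉ C := by
      intro h
      exact hy'nr (G.rtg_symm S' (Finset.mem_filter.mp h).2)
    have hCsub : C ⊆ S' := Finset.filter_subset _ _
    have hCconn : G.ConnectedSet C := by
      refine G.connected_of_hub hy'C (fun x hx => ?_)
      exact G.rtg_refine (Finset.mem_filter.mp hx).2
    -- a vertex of C adjacent to w
    have hy'w : y' ≠ w := (Finset.mem_erase.mp hy'S').1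
    obtain ⟨t, htp, htw⟩ := (G.exit_lemma (hS.2 y' (Finset.mem_of_mem_erase hy'S') w hwS)).resolve_left hy'w
    have htC : t ∈ C := by
      rcases G.rtg_mem htp with rfl | ⟨_, ht⟩
      · exact hy'C
      · exact Finset.mem_filter.mpr ⟨ht, htp⟩
    set S₂ : Finset V := C ∪ {w} with hS₂def
    have hS₂conn : G.ConnectedSet S₂ :=
      G.connected_union hCconn (G.connected_singleton w) htC (Finset.mem_singleton_self w) htw
    have hS₂subS : S₂ ⊆ S := by
      intro x hx
      rcases Finset.mem_union.mp hx with h | h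
      · exact Finset.mem_of_mem_erase (hCsub h)
      · exact (Finset.mem_singleton.mp h) ▸ hwS
    have hS₂card : S₂.card ≤ n := by
      have hsub : S₂ ⊆ S.erase u := by
        intro x hx
        rcases Finset.mem_union.mp hx with h | h
        · exact Finset.mem_erase.mpr ⟨fun he => huC (he ▸ h), Finset.mem_of_mem_erase (hCsub h)⟩
        · exact Finset.mem_erase.mpr ⟨(Finset.mem_singleton.mp h) ▸ hwu, (Finset.mem_singleton.mp h) ▸ hwS⟩
      have := Finset.card_le_card hsub
      rw [Finset.card_erase_of_mem hu] at this
      omega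
    have hwS₂ : w ∈ S₂ := Finset.mem_union_right _ (Finset.mem_singleton_self w)
    have hS₂two : 2 ≤ S₂.card := by
      have hsub : {y', w} ⊆ S₂ := by
        intro x hx
        rcases Finset.mem_insert.mp hx with rfl | hx
        · exact Finset.mem_union_left _ hy'C
        · exact (Finset.mem_singleton.mp hx) ▸ hwS₂
      have := Finset.card_le_card hsub
      rwa [Finset.card_pair hy'w] at this
    obtain ⟨v, hvS₂, hvw, hvconn⟩ := ih S₂ hS₂card hS₂conn hS₂two w hwS₂
    have hvC : v ∈ C := (Finset.mem_union.mp hvS₂).resolve_right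
      (fun h => hvw (Finset.mem_singleton.mp h))
    have hvu : v ≠ u := fun h => huC (h ▸ hvC)
    have hvS : v ∈ S := hS₂subS hvS₂
    refine ⟨v, hvS, hvu, ?_⟩
    have hwmem : w ∈ S.erase v := Finset.mem_erase.mpr ⟨fun h => hvw h.symm, hwS⟩
    refine G.connected_of_hub hwmem (fun z hz => ?_)
    have hzS : z ∈ S := Finset.mem_of_mem_erase hz
    have hzv : z ≠ v := (Finset.mem_erase.mp hz).1
    by_cases hzS₂ : z ∈ S₂
    · have : z ∈ S₂.erase v := Finset.mem_erase.mpr ⟨hzv, hzS₂⟩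
      have hw2 : w ∈ S₂.erase v := Finset.mem_erase.mpr ⟨fun h => hvw h.symm, hwS₂⟩
      exact G.rtg_mono (Finset.erase_subset_erase v hS₂subS) (hvconn.2 w hw2 z this)
    · -- z ∉ S₂ : z ≠ w, z ∉ C
      have hzw : z ≠ w := fun h => hzS₂ (h ▸ hwS₂)
      have hzC : z ∉ C := fun h => hzS₂ (Finset.mem_union_left _ h)
      have hzS' : z ∈ S' := Finset.mem_erase.mpr ⟨hzw, hzS⟩
      obtain ⟨t₂, ht₂p, ht₂w⟩ := (G.exit_lemma (hS.2 z hzS w hwS)).resolve_left hzw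
      -- the component of z in S' avoids v
      have hcompsub : S'.filter (fun x => Relation.ReflTransGen (G.AdjOn S') z x) ⊆ S.erase v := by
        intro x hx
        obtain ⟨hxS', hxp⟩ := Finset.mem_filter.mp hx
        refine Finset.mem_erase.mpr ⟨?_, Finset.mem_of_mem_erase hxS'⟩
        rintro rfl
        -- then z reaches v, v reaches y', so y' reaches z, hence z ∈ C
        have hvy' : Relation.ReflTransGen (G.AdjOn S') x y' :=
          G.rtg_symm S' (Finset.mem_filter.mp hvC).2
        exact hzC (Finset.mem_filter.mpr ⟨hzS', G.rtg_symm S' (hxp.trans hvy')⟩)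
      have hpath : Relation.ReflTransGen (G.AdjOn (S.erase v)) z t₂ :=
        G.rtg_mono hcompsub (G.rtg_refine ht₂p)
      have ht₂mem : t₂ ∈ S.erase v := by
        refine hcompsub ?_
        rcases G.rtg_mem ht₂p with rfl | ⟨_, ht⟩
        · exact Finset.mem_filter.mpr ⟨hzS', Relation.ReflTransGen.refl⟩
        · exact Finset.mem_filter.mpr ⟨ht, ht₂p⟩
      exact G.rtg_symm _ (hpath.tail ⟨ht₂mem, hwmem, ht₂w⟩)

lemma exists_ends (e : G.E) : ∃ x y, G.ends e = s(x, y) := by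
  obtain ⟨⟨x, y⟩, h⟩ := Quot.exists_rep (G.ends e)
  exact ⟨x, y, h.symm⟩

lemma inside_empty_of_card_le_one {S : Finset V} (h : S.card ≤ 1) :
    G.inside S = ∅ := by
  rw [Finset.eq_empty_iff_forall_notMem]
  intro e he
  obtain ⟨x, y, hxy⟩ := G.exists_ends e
  have hmem := (Finset.mem_filter.mp he).2
  have hx : x ∈ S := hmem x (by rw [hxy]; exact Sym2.mem_mk_left x y)
  have hy : y ∈ S := hmem y (by rw [hxy]; exact Sym2.mem_mk_right x y)
  have hne : x ≠ y := by
    intro hc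
    exact G.loopless e (by rw [hxy]; exact Sym2.mk_isDiag_iff.mpr hc)
  have : ({x, y} : Finset V) ⊆ S := by
    intro z hz
    rcases Finset.mem_insert.mp hz with rfl | hz
    · exact hx
    · exact (Finset.mem_singleton.mp hz) ▸ hy
  have := Finset.card_le_card this
  rw [Finset.card_pair hne] at this
  omega

lemma inside_split {S : Finset V} {v : V} (hv : v ∈ S) :
    (G.inside S).card = (G.inside (S.erase v)).card + (G.crossing {v} (S.erase v)).card := by
  have hdisj : Disjoint (G.inside (S.erase v)) (G.crossing {v} (S.erase v)) := by
    rw [Finset.disjoint_left]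
    intro e he he'
    obtain ⟨x, hx, y, hy, hxy⟩ := (Finset.mem_filter.mp he').2
    rw [Finset.mem_singleton] at hx
    subst hx
    have := (Finset.mem_filter.mp he).2 x (by rw [hxy]; exact Sym2.mem_mk_left x y)
    exact (Finset.mem_erase.mp this).1 rfl
  have hunion : G.inside S = G.inside (S.erase v) ∪ G.crossing {v} (S.erase v) := by
    ext e
    constructor
    · intro he
      have hmem := (Finset.mem_filter.mp he).2
      obtain ⟨x, y, hxy⟩ := G.exists_ends e
      have hx : x ∈ S := hmem x (by rw [hxy]; exact Sym2.mem_mk_left x y)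
      have hy : y ∈ S := hmem y (by rw [hxy]; exact Sym2.mem_mk_right x y)
      have hne : x ≠ y := by
        intro hc
        exact G.loopless e (by rw [hxy]; exact Sym2.mk_isDiag_iff.mpr hc)
      by_cases hxv : x = v
      · subst hxv
        refine Finset.mem_union_right _ (Finset.mem_filter.mpr ⟨Finset.mem_univ _,
          x, Finset.mem_singleton_self x, y, Finset.mem_erase.mpr ⟨fun h => hne h.symm, hy⟩, hxy⟩)
      by_cases hyv : y = v
      · subst hyv
        refine Finset.mem_union_right _ (Finset.mem_filter.mpr ⟨Finset.mem_univ _,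
          y, Finset.mem_singleton_self y, x, Finset.mem_erase.mpr ⟨hxv, hx⟩, ?_⟩)
        rw [hxy, Sym2.eq_swap]
      · refine Finset.mem_union_left _ (Finset.mem_filter.mpr ⟨Finset.mem_univ _, ?_⟩)
        intro z hz
        rw [hxy, Sym2.mem_iff] at hz
        rcases hz with rfl | rfl
        · exact Finset.mem_erase.mpr ⟨hxv, hx⟩
        · exact Finset.mem_erase.mpr ⟨hyv, hy⟩
    · intro he
      rcases Finset.mem_union.mp he with h | h
      · refine Finset.mem_filter.mpr ⟨Finset.mem_univ _, fun z hz => ?_⟩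
        exact Finset.mem_of_mem_erase ((Finset.mem_filter.mp h).2 z hz)
      · obtain ⟨x, hx, y, hy, hxy⟩ := (Finset.mem_filter.mp h).2
        rw [Finset.mem_singleton] at hx
        subst hx
        refine Finset.mem_filter.mpr ⟨Finset.mem_univ _, fun z hz => ?_⟩
        rw [hxy, Sym2.mem_iff] at hz
        rcases hz with rfl | rfl
        · exact hv
        · exact Finset.mem_of_mem_erase hy
  rw [hunion, Finset.card_union_of_disjoint hdisj]

lemma crossing_lt {c : ℕ} (hfree : ¬ G.HasThetaMinor c) {X Y : Finset V}
    (hd : Disjoint X Y) (hX : G.ConnectedSet X) (hY : G.ConnectedSet Y) :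
    (G.crossing X Y).card < c := by
  by_contra h
  push_neg at h
  exact hfree ⟨X, Y, hd, hX, hY, h⟩

lemma inside_bound {c : ℕ} (hc : 0 < c) (hfree : ¬ G.HasThetaMinor c) :
    ∀ n : ℕ, ∀ S : Finset V, S.card ≤ n → G.ConnectedSet S →
      (G.inside S).card ≤ 2 * c * S.card := by
  intro n
  induction n with
  | zero =>
    intro S hS _
    rw [G.inside_empty_of_card_le_one (by omega)]
    simp
  | succ n ih =>
    intro S hSn hS
    by_cases h1 : S.card ≤ 1
    · rw [G.inside_empty_of_card_le_one h1]
      simp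
    push_neg at h1
    obtain ⟨u, hu⟩ := hS.1
    obtain ⟨v, hvS, _, hvconn⟩ := G.removable (n + 1) S hSn hS h1 u hu
    have hdisj : Disjoint ({v} : Finset V) (S.erase v) :=
      Finset.disjoint_singleton_left.mpr (Finset.notMem_erase v S)
    have hcross : (G.crossing {v} (S.erase v)).card < c :=
      G.crossing_lt hfree hdisj (G.connected_singleton v) hvconn
    have hcard : (S.erase v).card = S.card - 1 := Finset.card_erase_of_mem hvS
    have hin : (G.inside (S.erase v)).card ≤ 2 * c * (S.erase v).card :=
      ih (S.erase v) (by omega) hvconn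
    rw [G.inside_split hvS]
    have step1 : (G.inside (S.erase v)).card + (G.crossing {v} (S.erase v)).card
        ≤ 2 * c * (S.erase v).card + c := Nat.add_le_add hin (Nat.le_of_lt hcross)
    have step2 : 2 * c * (S.erase v).card + c ≤ 2 * c * ((S.erase v).card + 1) := by
      have hcc : c ≤ 2 * c := by omega
      calc 2 * c * (S.erase v).card + c ≤ 2 * c * (S.erase v).card + 2 * c :=
            Nat.add_le_add_left hcc _
        _ = 2 * c * ((S.erase v).card + 1) := by ring
    have hm : (S.erase v).card + 1 = S.card := by omega
    rw [hm] at step2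
    exact step1.trans step2

/-- The connectivity setoid on vertices. -/
def conSetoid : Setoid V :=
  ⟨fun x y => Relation.ReflTransGen (G.AdjOn Finset.univ) x y,
    ⟨fun _ => Relation.ReflTransGen.refl, fun h => G.rtg_symm _ h, fun h h' => h.trans h'⟩⟩

noncomputable def eClass (e : G.E) : Quotient G.conSetoid :=
  Quotient.mk G.conSetoid (Classical.choose (G.exists_ends e))

lemma eClass_eq {e : G.E} {x y : V} (h : G.ends e = s(x, y)) :
    G.eClass e = Quotient.mk G.conSetoid x := by
  obtain ⟨b, hb⟩ := Classical.choose_spec (G.exists_ends e)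
  set a := Classical.choose (G.exists_ends e) with ha
  have hab : G.AdjV a b := ⟨e, hb⟩
  have hq : Quotient.mk G.conSetoid a = Quotient.mk G.conSetoid b :=
    Quotient.sound (Relation.ReflTransGen.single ⟨Finset.mem_univ _, Finset.mem_univ _, hab⟩)
  rw [h] at hb
  rcases Sym2.eq_iff.mp hb.symm with ⟨rfl, rfl⟩ | ⟨rfl, rfl⟩
  · rfl
  · exact hq

end Helpers

end Multigraph

/-- Every θ_c-minor-free multigraph satisfies |E(G)| ≤ 2c·|V(G)|. -/
theorem card_edges_le_of_theta_free {V : Type} [Fintype V] [DecidableEq V]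
    (G : Multigraph V) (c : ℕ) (hc : 0 < c) (hfree : ¬ G.HasThetaMinor c) :
    Fintype.card G.E ≤ 2 * c * Fintype.card V := by
  classical
  letI : DecidableEq (Quotient G.conSetoid) := Classical.decEq _
  have hE : Fintype.card G.E =
      ∑ q ∈ (Finset.univ : Finset (Quotient G.conSetoid)),
        (Finset.univ.filter (fun e => G.eClass e = q)).card := by
    rw [← Finset.card_univ]
    exact Finset.card_eq_sum_card_fiberwise (fun e _ => Finset.mem_univ _)
  have hV : Fintype.card V =
      ∑ q ∈ (Finset.univ : Finset (Quotient G.conSetoid)),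
        (Finset.univ.filter (fun v : V => Quotient.mk G.conSetoid v = q)).card := by
    rw [← Finset.card_univ]
    exact Finset.card_eq_sum_card_fiberwise (fun v _ => Finset.mem_univ _)
  have key : ∀ q : Quotient G.conSetoid,
      (Finset.univ.filter (fun e => G.eClass e = q)).card ≤
        2 * c * (Finset.univ.filter (fun v : V => Quotient.mk G.conSetoid v = q)).card := by
    intro q
    obtain ⟨w, rfl⟩ := Quotient.exists_rep q
    set T := Finset.univ.filter
      (fun v : V => Quotient.mk G.conSetoid v = Quotient.mk G.conSetoid w) with hT
    have hwT : w ∈ T := Finset.mem_filter.mpr ⟨Finset.mem_univ _, rfl⟩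
    have hTconn : G.ConnectedSet T := by
      refine G.connected_of_hub hwT (fun x hx => ?_)
      have hr : Relation.ReflTransGen (G.AdjOn Finset.univ) w x :=
        G.rtg_symm _ (Quotient.exact ((Finset.mem_filter.mp hx).2))
      have hsub : Finset.univ.filter
          (fun z => Relation.ReflTransGen (G.AdjOn Finset.univ) w z) ⊆ T := by
        intro z hz
        refine Finset.mem_filter.mpr ⟨Finset.mem_univ _, ?_⟩
        exact (Quotient.sound ((Finset.mem_filter.mp hz).2)).symm
      exact G.rtg_mono hsub (G.rtg_refine hr)
    have hfib : Finset.univ.filter (fun e => G.eClass e = Quotient.mk G.conSetoid w)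
        ⊆ G.inside T := by
      intro e he
      have hq := (Finset.mem_filter.mp he).2
      obtain ⟨x, y, hxy⟩ := G.exists_ends e
      have hxy' : G.ends e = s(y, x) := hxy.trans (Sym2.eq_swap)
      have hx : Quotient.mk G.conSetoid x = Quotient.mk G.conSetoid w :=
        (G.eClass_eq hxy).symm.trans hq
      have hy : Quotient.mk G.conSetoid y = Quotient.mk G.conSetoid w :=
        (G.eClass_eq hxy').symm.trans hq
      refine Finset.mem_filter.mpr ⟨Finset.mem_univ _, fun z hz => ?_⟩
      rw [hxy, Sym2.mem_iff] at hz
      rcases hz with rfl | rfl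
      · exact Finset.mem_filter.mpr ⟨Finset.mem_univ _, hx⟩
      · exact Finset.mem_filter.mpr ⟨Finset.mem_univ _, hy⟩
    calc (Finset.univ.filter (fun e => G.eClass e = Quotient.mk G.conSetoid w)).card
        ≤ (G.inside T).card := Finset.card_le_card hfib
      _ ≤ 2 * c * T.card := G.inside_bound hc hfree T.card T le_rfl hTconn
  rw [hE, hV, Finset.mul_sum]
  exact Finset.sum_le_sum (fun q _ => key q)
end

section
/- Let c be a nonnegative integer, r a positive integer, G a graph, and C a cluster partition of G of capacity at most r such that every vertex of the contracted graph G/C has edge-degree at least 8c. Define the weight w(v) = |ext(C)|/|C| for each v in a cluster C ∈ C. Then for every c-bond cover X of G, (1/(2r))·|E(G/C)| ≤ Σ_{v∈X} w(v) ≤ 2·|E(G/C)|. -/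
open Finset

attribute [local instance] Classical.propDecidable

section Aux

open Multigraph

variable {V : Type} [Fintype V] [DecidableEq V]

lemma mem_crossing_iff (G : Multigraph V) {A B : Finset V} {e : G.E} :
    e ∈ G.crossing A B ↔ ∃ x ∈ A, ∃ y ∈ B, G.ends e = s(x, y) := by
  simp [Multigraph.crossing]

lemma sym2_exists (z : Sym2 V) : ∃ a b : V, z = s(a, b) :=
  Sym2.ind (fun a b => ⟨a, b, rfl⟩) z

lemma connectedSet_union (G : Multigraph V) {C D : Finset V} {x y : V}
    (hC : G.ConnectedSet C) (hD : G.ConnectedSet D) (hx : x ∈ C) (hy : y ∈ D)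
    (hxy : G.AdjV x y) : G.ConnectedSet (C ∪ D) := by
  have liftC : ∀ a b : V, Relation.ReflTransGen (G.AdjOn C) a b →
      Relation.ReflTransGen (G.AdjOn (C ∪ D)) a b := fun a b h =>
    Relation.ReflTransGen.mono (r := G.AdjOn C) (p := G.AdjOn (C ∪ D)) (fun u v huv => ⟨Finset.mem_union_left _ huv.1, Finset.mem_union_left _ huv.2.1, huv.2.2⟩) a b h
  have liftD : ∀ a b : V, Relation.ReflTransGen (G.AdjOn D) a b →
      Relation.ReflTransGen (G.AdjOn (C ∪ D)) a b := fun a b h =>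
    Relation.ReflTransGen.mono (r := G.AdjOn D) (p := G.AdjOn (C ∪ D)) (fun u v huv => ⟨Finset.mem_union_right _ huv.1, Finset.mem_union_right _ huv.2.1, huv.2.2⟩) a b h
  have step : Relation.ReflTransGen (G.AdjOn (C ∪ D)) x y :=
    Relation.ReflTransGen.single
      ⟨Finset.mem_union_left _ hx, Finset.mem_union_right _ hy, hxy⟩
  have step' : Relation.ReflTransGen (G.AdjOn (C ∪ D)) y x :=
    Relation.ReflTransGen.single
      ⟨Finset.mem_union_right _ hy, Finset.mem_union_left _ hx, by
        obtain ⟨e, he⟩ := hxy; exact ⟨e, he.trans Sym2.eq_swap⟩⟩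
  refine ⟨hC.1.mono Finset.subset_union_left, ?_⟩
  intro a ha b hb
  rcases Finset.mem_union.1 ha with ha' | ha' <;> rcases Finset.mem_union.1 hb with hb' | hb'
  · exact liftC _ _ (hC.2 a ha' b hb')
  · exact ((liftC _ _ (hC.2 a ha' x hx)).trans step).trans (liftD _ _ (hD.2 y hy b hb'))
  · exact ((liftD _ _ (hD.2 a ha' y hy)).trans step').trans (liftC _ _ (hC.2 x hx b hb'))
  · exact liftD _ _ (hD.2 a ha' b hb')

lemma connectedSet_induce (G : Multigraph V) {S A : Finset V} (hA : A ⊆ S)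
    (h : G.ConnectedSet A) : (G.induce S).ConnectedSet A := by
  refine ⟨h.1, fun a ha b hb => ?_⟩
  refine Relation.ReflTransGen.mono (r := G.AdjOn A) (p := (G.induce S).AdjOn A) (fun u v huv => ?_) a b (h.2 a ha b hb)
  obtain ⟨hu, hv, e, he⟩ := huv
  refine ⟨hu, hv, ⟨e, fun z hz => ?_⟩, he⟩
  rw [he] at hz
  rcases Sym2.mem_iff.1 hz with rfl | rfl
  · exact hA hu
  · exact hA hv

lemma crossing_card_le_induce (G : Multigraph V) {S A B : Finset V}
    (hA : A ⊆ S) (hB : B ⊆ S) :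
    (G.crossing A B).card ≤ (((G.induce S)).crossing A B).card := by
  apply Finset.card_le_card_of_surjOn (fun e => e.1)
  intro e he
  simp only [Finset.coe_filter, Set.mem_setOf_eq, Multigraph.crossing, Finset.mem_filter,
    Finset.mem_univ, true_and] at he ⊢
  obtain ⟨x, hxA, y, hyB, hxy⟩ := he
  have hprop : ∀ v ∈ G.ends e, v ∈ S := by
    intro v hv
    rw [hxy] at hv
    rcases Sym2.mem_iff.1 hv with rfl | rfl
    · exact hA hxA
    · exact hB hyB
  exact ⟨⟨e, hprop⟩, ⟨x, hxA, y, hyB, hxy⟩, rfl⟩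

/-- The edges between two distinct members of a family of vertex sets. -/
noncomputable def qE (G : Multigraph V) (𝒟 : Finset (Finset V)) : Finset G.E :=
  Finset.univ.filter (fun e => ∃ C ∈ 𝒟, ∃ D ∈ 𝒟, C ≠ D ∧
    ∃ x ∈ C, ∃ y ∈ D, G.ends e = s(x, y))

lemma qE_bound (G : Multigraph V) (c : ℕ) (P : Finset V)
    (hP : ∀ A B : Finset V, A ⊆ P → B ⊆ P → Disjoint A B → G.ConnectedSet A →
      G.ConnectedSet B → ¬ (c ≤ (G.crossing A B).card)) :
    ∀ n (𝒟 : Finset (Finset V)), 𝒟.card ≤ n → (∀ D ∈ 𝒟, D ⊆ P) →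
      (∀ D ∈ 𝒟, G.ConnectedSet D) →
      (∀ C ∈ 𝒟, ∀ D ∈ 𝒟, C ≠ D → Disjoint C D) →
      (qE G 𝒟).card ≤ 2 * c * 𝒟.card := by
  intro n
  induction n with
  | zero =>
    intro 𝒟 hcard _ _ _
    have : 𝒟 = ∅ := Finset.card_eq_zero.1 (Nat.le_zero.1 hcard)
    subst this
    simp [qE]
  | succ n ih =>
    intro 𝒟 hcard hsub hconn hdisj
    by_cases hempty : (qE G 𝒟) = ∅
    · simp [hempty]
    obtain ⟨e, he⟩ := Finset.nonempty_iff_ne_empty.2 hempty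
    simp only [qE, Finset.mem_filter, Finset.mem_univ, true_and] at he
    obtain ⟨C, hC, D, hD, hCD, x, hx, y, hy, hexy⟩ := he
    have hCDdisj : Disjoint C D := hdisj C hC D hD hCD
    have hecross : e ∈ G.crossing C D := (mem_crossing_iff G).2 ⟨x, hx, y, hy, hexy⟩
    have hcross : (G.crossing C D).card < c := by
      by_contra hcon
      exact hP C D (hsub C hC) (hsub D hD) hCDdisj (hconn C hC) (hconn D hD)
        (Nat.le_of_not_lt hcon)
    have hc1 : 1 ≤ (G.crossing C D).card := Finset.card_pos.2 ⟨e, hecross⟩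
    -- merged family
    set 𝒟₀ := (𝒟.erase C).erase D with h𝒟₀
    set 𝒟' := insert (C ∪ D) 𝒟₀ with h𝒟'
    have hD𝒟₀ : D ∈ 𝒟.erase C := Finset.mem_erase.2 ⟨fun h => hCD h.symm, hD⟩
    have hmem₀ : ∀ A ∈ 𝒟₀, A ∈ 𝒟 ∧ A ≠ C ∧ A ≠ D := by
      intro A hA
      rw [h𝒟₀] at hA
      obtain ⟨hAD, hAC, hA𝒟⟩ := Finset.mem_erase.1 hA |>.imp id (fun h => Finset.mem_erase.1 h)
      exact ⟨hA𝒟, hAC, hAD⟩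
    have hmem₀' : ∀ A ∈ 𝒟, A ≠ C → A ≠ D → A ∈ 𝒟₀ := by
      intro A hA hAC hAD
      exact Finset.mem_erase.2 ⟨hAD, Finset.mem_erase.2 ⟨hAC, hA⟩⟩
    have hCne : C.Nonempty := (hconn C hC).1
    have hCDnot : (C ∪ D) ∉ 𝒟₀ := by
      intro hmem
      obtain ⟨hmem𝒟, hneC, _⟩ := hmem₀ _ hmem
      have := hdisj _ hmem𝒟 C hC hneC
      obtain ⟨v, hv⟩ := hCne
      exact (Finset.disjoint_left.1 this (Finset.mem_union_left _ hv)) hv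
    have hcard' : 𝒟'.card = 𝒟.card - 1 := by
      rw [h𝒟', Finset.card_insert_of_notMem hCDnot, h𝒟₀,
        Finset.card_erase_of_mem hD𝒟₀, Finset.card_erase_of_mem hC]
      have h2 : 2 ≤ 𝒟.card := Finset.one_lt_card.2 ⟨C, hC, D, hD, hCD⟩
      omega
    have hcard'' : 𝒟'.card ≤ n := by omega
    -- hypotheses for 𝒟'
    have hsub' : ∀ A ∈ 𝒟', A ⊆ P := by
      intro A hA
      rcases Finset.mem_insert.1 hA with rfl | hA'
      · exact Finset.union_subset (hsub C hC) (hsub D hD)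
      · exact hsub A (hmem₀ A hA').1
    have hconn' : ∀ A ∈ 𝒟', G.ConnectedSet A := by
      intro A hA
      rcases Finset.mem_insert.1 hA with rfl | hA'
      · exact connectedSet_union G (hconn C hC) (hconn D hD) hx hy ⟨e, hexy⟩
      · exact hconn A (hmem₀ A hA').1
    have hdisjCD : ∀ A ∈ 𝒟₀, Disjoint (C ∪ D) A := by
      intro A hA
      obtain ⟨hA𝒟, hAC, hAD⟩ := hmem₀ A hA
      exact Finset.disjoint_union_left.2
        ⟨hdisj C hC A hA𝒟 (fun h => hAC h.symm), hdisj D hD A hA𝒟 (fun h => hAD h.symm)⟩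
    have hdisj' : ∀ A ∈ 𝒟', ∀ B ∈ 𝒟', A ≠ B → Disjoint A B := by
      intro A hA B hB hAB
      rcases Finset.mem_insert.1 hA with rfl | hA' <;> rcases Finset.mem_insert.1 hB with rfl | hB'
      · exact absurd rfl hAB
      · exact hdisjCD B hB'
      · exact (hdisjCD A hA').symm
      · exact hdisj A (hmem₀ A hA').1 B (hmem₀ B hB').1 hAB
    have hneCD : ∀ B ∈ 𝒟₀, C ∪ D ≠ B := by
      intro B hB h
      obtain ⟨v, hv⟩ := hCne
      exact (Finset.disjoint_left.1 (hdisjCD B hB) (Finset.mem_union_left _ hv)) (h ▸ Finset.mem_union_left _ hv)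
    -- subset relation
    have hsubset : qE G 𝒟 ⊆ qE G 𝒟' ∪ G.crossing C D := by
      intro f hf
      simp only [qE, Finset.mem_filter, Finset.mem_univ, true_and] at hf
      obtain ⟨A, hA, B, hB, hAB, a, haA, b, hbB, hfab⟩ := hf
      rw [Finset.mem_union]
      by_cases hA' : A = C ∨ A = D
      · by_cases hB' : B = C ∨ B = D
        · -- {A, B} = {C, D}
          right
          rcases hA' with rfl | rfl <;> rcases hB' with rfl | rfl
          · exact absurd rfl hAB
          · exact (mem_crossing_iff G).2 ⟨a, haA, b, hbB, hfab⟩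
          · exact (mem_crossing_iff G).2 ⟨b, hbB, a, haA, hfab.trans (Sym2.eq_swap)⟩
          · exact absurd rfl hAB
        · left
          push_neg at hB'
          have hB₀ : B ∈ 𝒟₀ := hmem₀' B hB hB'.1 hB'.2
          have haCD : a ∈ C ∪ D := by
            rcases hA' with rfl | rfl
            · exact Finset.mem_union_left _ haA
            · exact Finset.mem_union_right _ haA
          simp only [qE, Finset.mem_filter, Finset.mem_univ, true_and]
          exact ⟨C ∪ D, Finset.mem_insert_self _ _, B, Finset.mem_insert_of_mem hB₀,
            hneCD B hB₀, a, haCD, b, hbB, hfab⟩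
      · push_neg at hA'
        have hA₀ : A ∈ 𝒟₀ := hmem₀' A hA hA'.1 hA'.2
        by_cases hB' : B = C ∨ B = D
        · left
          have hbCD : b ∈ C ∪ D := by
            rcases hB' with rfl | rfl
            · exact Finset.mem_union_left _ hbB
            · exact Finset.mem_union_right _ hbB
          simp only [qE, Finset.mem_filter, Finset.mem_univ, true_and]
          exact ⟨A, Finset.mem_insert_of_mem hA₀, C ∪ D, Finset.mem_insert_self _ _,
            fun h => hneCD A hA₀ h.symm, a, haA, b, hbCD, hfab⟩
        · left
          push_neg at hB'
          have hB₀ : B ∈ 𝒟₀ := hmem₀' B hB hB'.1 hB'.2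
          simp only [qE, Finset.mem_filter, Finset.mem_univ, true_and]
          exact ⟨A, Finset.mem_insert_of_mem hA₀, B, Finset.mem_insert_of_mem hB₀,
            hAB, a, haA, b, hbB, hfab⟩
    have hIH := ih 𝒟' hcard'' hsub' hconn' hdisj'
    have h2 : 2 ≤ 𝒟.card := Finset.one_lt_card.2 ⟨C, hC, D, hD, hCD⟩
    calc (qE G 𝒟).card ≤ (qE G 𝒟' ∪ G.crossing C D).card := Finset.card_le_card hsubset
      _ ≤ (qE G 𝒟').card + (G.crossing C D).card := Finset.card_union_le _ _
      _ ≤ 2 * c * 𝒟'.card + (G.crossing C D).card := by omega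
      _ ≤ 2 * c * (𝒟.card - 1) + (c - 1) := by
          rw [hcard']
          omega
      _ ≤ 2 * c * 𝒟.card := by
          obtain ⟨k, hk⟩ : ∃ k, 𝒟.card = k + 2 := ⟨𝒟.card - 2, by omega⟩
          rw [hk]
          have : 2 * c * (k + 2) = 2 * c * (k + 1) + 2 * c := by ring
          rw [this]
          have hsimp : k + 2 - 1 = k + 1 := by omega
          rw [hsimp]
          omega

lemma sum_cross_le_two_interE (G : Multigraph V) (𝒞 : Finset (Finset V))
    (hdisj : ∀ C ∈ 𝒞, ∀ D ∈ 𝒞, C ≠ D → Disjoint C D)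
    (hpart : 𝒞.biUnion id = Finset.univ) :
    ∑ C ∈ 𝒞, (G.crossing C Cᶜ).card ≤ 2 * (G.interE 𝒞).card := by
  have hclmem : ∀ v : V, ∃ C ∈ 𝒞, v ∈ C := by
    intro v
    have : v ∈ 𝒞.biUnion id := hpart ▸ Finset.mem_univ v
    simpa using Finset.mem_biUnion.1 this
  have huniq : ∀ C ∈ 𝒞, ∀ D ∈ 𝒞, ∀ v : V, v ∈ C → v ∈ D → C = D := by
    intro C hC D hD v hvC hvD
    by_contra h
    exact Finset.disjoint_left.1 (hdisj C hC D hD h) hvC hvD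
  have hsub : ∀ C ∈ 𝒞, G.crossing C Cᶜ ⊆ G.interE 𝒞 := by
    intro C hC e he
    rw [mem_crossing_iff] at he
    obtain ⟨x, hx, y, hy, hxy⟩ := he
    simp only [Multigraph.interE, Finset.mem_filter, Finset.mem_univ, true_and]
    rintro ⟨C', hC', hall⟩
    have hxC' : x ∈ C' := hall x (by rw [hxy]; exact Sym2.mem_iff.2 (Or.inl rfl))
    have hyC' : y ∈ C' := hall y (by rw [hxy]; exact Sym2.mem_iff.2 (Or.inr rfl))
    have hCC' : C = C' := huniq C hC C' hC' x hx hxC'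
    exact (Finset.mem_compl.1 hy) (hCC' ▸ hyC')
  calc ∑ C ∈ 𝒞, (G.crossing C Cᶜ).card
      = ∑ C ∈ 𝒞, ((G.interE 𝒞).filter (fun e => e ∈ G.crossing C Cᶜ)).card := by
        refine Finset.sum_congr rfl fun C hC => ?_
        rw [Finset.filter_mem_eq_inter, Finset.inter_eq_right.2 (hsub C hC)]
    _ = ∑ C ∈ 𝒞, ∑ e ∈ G.interE 𝒞, if e ∈ G.crossing C Cᶜ then 1 else 0 := by
        simp [Finset.card_filter]
    _ = ∑ e ∈ G.interE 𝒞, ∑ C ∈ 𝒞, if e ∈ G.crossing C Cᶜ then 1 else 0 := Finset.sum_comm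
    _ ≤ ∑ _e ∈ G.interE 𝒞, 2 := by
        refine Finset.sum_le_sum fun e _ => ?_
        rw [← Finset.card_filter]
        obtain ⟨a, b, hab⟩ := sym2_exists (G.ends e)
        obtain ⟨Ca, hCa, haCa⟩ := hclmem a
        obtain ⟨Cb, hCb, hbCb⟩ := hclmem b
        refine le_trans (Finset.card_le_card (t := insert Ca {Cb}) ?_) ?_
        · intro C hCf
          obtain ⟨hC, hcr⟩ := Finset.mem_filter.1 hCf
          rw [mem_crossing_iff] at hcr
          obtain ⟨x, hx, y, hy, hxy⟩ := hcr
          have hx2 : s(x, y) = s(a, b) := hxy.symm.trans hab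
          rw [Finset.mem_insert, Finset.mem_singleton]
          rcases Sym2.eq_iff.1 hx2 with ⟨rfl, rfl⟩ | ⟨rfl, rfl⟩
          · exact Or.inl (huniq C hC Ca hCa x hx haCa)
          · exact Or.inr (huniq C hC Cb hCb x hx hbCb)
        · exact le_trans (Finset.card_insert_le _ _) (by simp)
    _ = 2 * (G.interE 𝒞).card := by rw [Finset.sum_const, smul_eq_mul, mul_comm]

end Aux

/-- the weighting lemma. For a cluster partition 𝒞 of capacity ≤ r
with every contracted vertex of edge-degree ≥ 8c, and w(v) = |ext(C)|/|C| for v ∈ C,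
every c-bond cover X satisfies |E(G/𝒞)|/(2r) ≤ w(X) ≤ 2|E(G/𝒞)|. -/
theorem weighting_scheme_bounds {V : Type} [Fintype V] [DecidableEq V]
    (G : Multigraph V) (c : ℕ) (r : ℕ) (hr : 0 < r)
    (𝒞 : Finset (Finset V)) (hcc : G.ClusterCollection 𝒞)
    (hpart : 𝒞.biUnion id = Finset.univ)
    (hcap : ∀ C ∈ 𝒞, C.card ≤ r)
    (hdeg : ∀ C ∈ 𝒞, 8 * c ≤ (G.crossing C Cᶜ).card)
    (w : V → ℝ)
    (hw : ∀ C ∈ 𝒞, ∀ v ∈ C, w v = ((G.crossing C Cᶜ).card : ℝ) / (C.card : ℝ))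
    (X : Finset V) (hX : G.CBondCover c X) :
    ((G.interE 𝒞).card : ℝ) / (2 * (r : ℝ)) ≤ ∑ v ∈ X, w v ∧
      ∑ v ∈ X, w v ≤ 2 * ((G.interE 𝒞).card : ℝ) := by
  obtain ⟨hne𝒞, hprops, hdisj⟩ := hcc
  have hconn : ∀ C ∈ 𝒞, G.ConnectedSet C := fun C hC => (hprops C hC).2
  have hclmem : ∀ v : V, ∃ C ∈ 𝒞, v ∈ C := by
    intro v
    have : v ∈ 𝒞.biUnion id := hpart ▸ Finset.mem_univ v
    simpa using Finset.mem_biUnion.1 this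
  have huniq : ∀ C ∈ 𝒞, ∀ D ∈ 𝒞, ∀ v : V, v ∈ C → v ∈ D → C = D := by
    intro C hC D hD v hvC hvD
    by_contra h
    exact Finset.disjoint_left.1 (hdisj C hC D hD h) hvC hvD
  have hw0 : ∀ v : V, 0 ≤ w v := by
    intro v
    obtain ⟨C, hC, hvC⟩ := hclmem v
    rw [hw C hC v hvC]
    positivity
  have hPD : (↑𝒞 : Set (Finset V)).PairwiseDisjoint (id : Finset V → Finset V) :=
    fun A hA B hB hAB => hdisj A hA B hB hAB
  have hsum_univ : ∑ v, w v = ∑ C ∈ 𝒞, ((G.crossing C Cᶜ).card : ℝ) := by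
    rw [← hpart, Finset.sum_biUnion hPD]
    refine Finset.sum_congr rfl fun C hC => ?_
    have hcard0 : (C.card : ℝ) ≠ 0 := by
      exact_mod_cast Finset.card_ne_zero.2 (hprops C hC).1
    calc ∑ v ∈ id C, w v = ∑ _v ∈ C, ((G.crossing C Cᶜ).card : ℝ) / (C.card : ℝ) :=
          Finset.sum_congr rfl (fun v hv => hw C hC v hv)
      _ = (C.card : ℝ) * (((G.crossing C Cᶜ).card : ℝ) / (C.card : ℝ)) := by
          rw [Finset.sum_const, nsmul_eq_mul]
      _ = _ := by field_simp
  have hcross2I : ∑ C ∈ 𝒞, ((G.crossing C Cᶜ).card : ℝ) ≤ 2 * ((G.interE 𝒞).card : ℝ) := by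
    exact_mod_cast sum_cross_le_two_interE G 𝒞 hdisj hpart
  have hupper : ∑ v ∈ X, w v ≤ 2 * ((G.interE 𝒞).card : ℝ) := by
    calc ∑ v ∈ X, w v ≤ ∑ v, w v :=
          Finset.sum_le_sum_of_subset_of_nonneg (Finset.subset_univ X) (fun v _ _ => hw0 v)
      _ = ∑ C ∈ 𝒞, ((G.crossing C Cᶜ).card : ℝ) := hsum_univ
      _ ≤ 2 * ((G.interE 𝒞).card : ℝ) := hcross2I
  refine ⟨?_, hupper⟩
  -- lower bound
  set hit := 𝒞.filter (fun C => ¬ Disjoint C X) with hhit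
  set unhit := 𝒞.filter (fun C => Disjoint C X) with hunhit
  have hP : ∀ A B : Finset V, A ⊆ Xᶜ → B ⊆ Xᶜ → Disjoint A B → G.ConnectedSet A →
      G.ConnectedSet B → ¬ (c ≤ (G.crossing A B).card) := by
    intro A B hA hB hAB hcA hcB hc
    exact hX ⟨A, B, hAB, connectedSet_induce G hA hcA, connectedSet_induce G hB hcB,
      le_trans hc (crossing_card_le_induce G hA hB)⟩
  have hQ : (qE G unhit).card ≤ 2 * c * 𝒞.card := by
    refine le_trans (qE_bound G c Xᶜ hP unhit.card unhit le_rfl ?_ ?_ ?_) ?_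
    · intro D hD
      obtain ⟨hD𝒞, hDX⟩ := Finset.mem_filter.1 hD
      intro v hv
      exact Finset.mem_compl.2 (Finset.disjoint_left.1 hDX hv)
    · exact fun D hD => hconn D (Finset.mem_filter.1 hD).1
    · exact fun A hA B hB hAB =>
        hdisj A (Finset.mem_filter.1 hA).1 B (Finset.mem_filter.1 hB).1 hAB
    · exact Nat.mul_le_mul_left _ (Finset.card_filter_le _ _)
  have hsplitsub : G.interE 𝒞 ⊆ qE G unhit ∪ hit.biUnion (fun C => G.crossing C Cᶜ) := by
    intro e he
    obtain ⟨a, b, hab⟩ := sym2_exists (G.ends e)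
    obtain ⟨Ca, hCa, haCa⟩ := hclmem a
    obtain ⟨Cb, hCb, hbCb⟩ := hclmem b
    have hCaCb : Ca ≠ Cb := by
      rintro rfl
      simp only [Multigraph.interE, Finset.mem_filter, Finset.mem_univ, true_and] at he
      refine he ⟨Ca, hCa, fun v hv => ?_⟩
      rw [hab] at hv
      rcases Sym2.mem_iff.1 hv with rfl | rfl
      exacts [haCa, hbCb]
    have hbnotCa : b ∉ Ca := fun hb => hCaCb (huniq Ca hCa Cb hCb b hb hbCb)
    have hanotCb : a ∉ Cb := fun ha => hCaCb (huniq Ca hCa Cb hCb a haCa ha)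
    by_cases hhitCa : Disjoint Ca X
    · by_cases hhitCb : Disjoint Cb X
      · refine Finset.mem_union_left _ ?_
        simp only [qE, Finset.mem_filter, Finset.mem_univ, true_and]
        exact ⟨Ca, Finset.mem_filter.2 ⟨hCa, hhitCa⟩, Cb, Finset.mem_filter.2 ⟨hCb, hhitCb⟩,
          hCaCb, a, haCa, b, hbCb, hab⟩
      · refine Finset.mem_union_right _
          (Finset.mem_biUnion.2 ⟨Cb, Finset.mem_filter.2 ⟨hCb, hhitCb⟩, ?_⟩)
        exact (mem_crossing_iff G).2
          ⟨b, hbCb, a, Finset.mem_compl.2 hanotCb, hab.trans Sym2.eq_swap⟩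
    · refine Finset.mem_union_right _
        (Finset.mem_biUnion.2 ⟨Ca, Finset.mem_filter.2 ⟨hCa, hhitCa⟩, ?_⟩)
      exact (mem_crossing_iff G).2 ⟨a, haCa, b, Finset.mem_compl.2 hbnotCa, hab⟩
  have hsplit : (G.interE 𝒞).card ≤ (qE G unhit).card + ∑ C ∈ hit, (G.crossing C Cᶜ).card :=
    le_trans (Finset.card_le_card hsplitsub)
      (le_trans (Finset.card_union_le _ _) (Nat.add_le_add_left Finset.card_biUnion_le _))
  have hdeg8 : 8 * c * 𝒞.card ≤ 2 * (G.interE 𝒞).card := by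
    have h1 : ∑ _C ∈ 𝒞, 8 * c ≤ ∑ C ∈ 𝒞, (G.crossing C Cᶜ).card :=
      Finset.sum_le_sum (fun C hC => hdeg C hC)
    rw [Finset.sum_const, smul_eq_mul] at h1
    calc 8 * c * 𝒞.card = 𝒞.card * (8 * c) := by ring
      _ ≤ ∑ C ∈ 𝒞, (G.crossing C Cᶜ).card := h1
      _ ≤ 2 * (G.interE 𝒞).card := sum_cross_le_two_interE G 𝒞 hdisj hpart
  have hkey : (G.interE 𝒞).card ≤ 2 * ∑ C ∈ hit, (G.crossing C Cᶜ).card := by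
    set t := c * 𝒞.card with ht
    have h1 : (qE G unhit).card ≤ 2 * t := by rw [ht, ← mul_assoc]; exact hQ
    have h2 : 8 * t ≤ 2 * (G.interE 𝒞).card := by rw [ht, ← mul_assoc]; exact hdeg8
    omega
  have hrpos : (0 : ℝ) < (r : ℝ) := by exact_mod_cast hr
  have hXsum : ((∑ C ∈ hit, (G.crossing C Cᶜ).card : ℕ) : ℝ) / (r : ℝ) ≤ ∑ v ∈ X, w v := by
    have hXeq : X = 𝒞.biUnion (fun C => X ∩ C) := by
      ext v
      simp only [Finset.mem_biUnion, Finset.mem_inter]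
      constructor
      · intro hv
        obtain ⟨C, hC, hvC⟩ := hclmem v
        exact ⟨C, hC, hv, hvC⟩
      · rintro ⟨C, _, hv, _⟩
        exact hv
    have hPD2 : (↑𝒞 : Set (Finset V)).PairwiseDisjoint (fun C => X ∩ C) :=
      fun A hA B hB hAB =>
        (hdisj A hA B hB hAB).mono Finset.inter_subset_right Finset.inter_subset_right
    rw [Nat.cast_sum, Finset.sum_div]
    calc ∑ C ∈ hit, ((G.crossing C Cᶜ).card : ℝ) / (r : ℝ)
        ≤ ∑ C ∈ hit, ∑ v ∈ X ∩ C, w v := by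
          refine Finset.sum_le_sum fun C hC => ?_
          obtain ⟨hC𝒞, hCX⟩ := Finset.mem_filter.1 hC
          obtain ⟨v₀, hv₀C, hv₀X⟩ := Finset.not_disjoint_iff.1 hCX
          have hle : w v₀ ≤ ∑ v ∈ X ∩ C, w v :=
            Finset.single_le_sum (fun v _ => hw0 v) (Finset.mem_inter.2 ⟨hv₀X, hv₀C⟩)
          have hwv : w v₀ = ((G.crossing C Cᶜ).card : ℝ) / (C.card : ℝ) := hw C hC𝒞 v₀ hv₀C
          have hCcardpos : (0 : ℝ) < (C.card : ℝ) := by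
            exact_mod_cast Finset.card_pos.2 ⟨v₀, hv₀C⟩
          have hCr : (C.card : ℝ) ≤ (r : ℝ) := by exact_mod_cast hcap C hC𝒞
          have := div_le_div_of_nonneg_left
            (show (0:ℝ) ≤ ((G.crossing C Cᶜ).card : ℝ) from Nat.cast_nonneg _) hCcardpos hCr
          linarith
      _ ≤ ∑ C ∈ 𝒞, ∑ v ∈ X ∩ C, w v :=
          Finset.sum_le_sum_of_subset_of_nonneg (Finset.filter_subset _ _)
            (fun C _ _ => Finset.sum_nonneg fun v _ => hw0 v)
      _ = ∑ v ∈ X, w v := by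
          conv_rhs => rw [hXeq]
          rw [Finset.sum_biUnion hPD2]
  have hkeyR : ((G.interE 𝒞).card : ℝ) ≤
      2 * ((∑ C ∈ hit, (G.crossing C Cᶜ).card : ℕ) : ℝ) := by exact_mod_cast hkey
  have hfin : ((G.interE 𝒞).card : ℝ) / (2 * (r : ℝ)) ≤
      ((∑ C ∈ hit, (G.crossing C Cᶜ).card : ℕ) : ℝ) / (r : ℝ) := by
    rw [div_le_div_iff₀ (by positivity) hrpos]
    nlinarith
  linarith
end

section
/- For any graph G, weighting w, and constant α ≥ 1: if H = (V, E, w°) is an α-thin layer of G = (V, E, w), T is an α-approximate c-bond cover for G' := (V, E, w − w°) restricted to vertices of positive residual weight, and D is the set of vertices whose residual weight is zero, then T ∪ D is an α-approximate c-bond cover for G. -/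
open Finset

attribute [local instance] Classical.propDecidable

namespace Multigraph

variable {V : Type} [Fintype V] [DecidableEq V] (G : Multigraph V)

lemma connectedSet_mono {A B : Finset V} (h : A ⊆ B) {S : Finset V}
    (hS : (G.induce A).ConnectedSet S) : (G.induce B).ConnectedSet S := by
  refine ⟨hS.1, fun x hx y hy => ?_⟩
  refine Relation.ReflTransGen.mono ?_ x y (hS.2 x hx y hy)
  rintro a b ⟨ha, hb, e, he⟩
  exact ⟨ha, hb, ⟨e.1, fun v hv => h (e.2 v hv)⟩, he⟩

lemma hasThetaMinor_mono {A B : Finset V} (h : A ⊆ B) {c : ℕ}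
    (hm : (G.induce A).HasThetaMinor c) : (G.induce B).HasThetaMinor c := by
  obtain ⟨X, Y, hdisj, hX, hY, hc⟩ := hm
  refine ⟨X, Y, hdisj, G.connectedSet_mono h hX, G.connectedSet_mono h hY, le_trans hc ?_⟩
  apply Finset.card_le_card_of_injOn
    (fun e => (⟨e.1, fun v hv => h (e.2 v hv)⟩ : (G.induce B).E))
  · intro e he
    simp only [crossing, Finset.coe_filter, Set.mem_setOf_eq, Finset.mem_coe, Finset.mem_filter, Finset.mem_univ, true_and] at he ⊢
    exact Finset.mem_coe.2 (Finset.mem_filter.2 ⟨Finset.mem_univ _, he⟩)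
  · intro e _ e' _ hee
    have hv : e.1 = e'.1 := by simpa using hee
    exact Subtype.ext hv

end Multigraph
/-- if H = (V,E,w°) is an α-thin layer of G = (V,E,w), T is an
α-approximate c-bond cover of the residual graph restricted to positive residual
weights, and D is the set of zero-residual vertices, then T ∪ D is an α-approximate
c-bond cover of G. -/
theorem thin_layer_peeling {V : Type} [Fintype V] [DecidableEq V]
    (G : Multigraph V) (c : ℕ) (w wo : V → ℝ) (α : ℝ) (hα : 1 ≤ α)
    (hwo : ∀ v, 0 ≤ wo v ∧ wo v ≤ w v)
    (htight : ∃ v, wo v = w v)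
    (hthin : ∀ S : Finset V, G.CBondCover c S →
      (1 / α) * ∑ v : V, wo v ≤ ∑ v ∈ S, wo v)
    (T : Finset V)
    (hTP : T ⊆ Finset.univ.filter (fun v => 0 < w v - wo v))
    (hTcov : ¬ (G.induce ((Finset.univ.filter (fun v => 0 < w v - wo v)) \ T)).HasThetaMinor c)
    (hTapx : ∀ T' ⊆ Finset.univ.filter (fun v => 0 < w v - wo v),
      ¬ (G.induce ((Finset.univ.filter (fun v => 0 < w v - wo v)) \ T')).HasThetaMinor c →
      ∑ v ∈ T, (w v - wo v) ≤ α * ∑ v ∈ T', (w v - wo v)) :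
    G.CBondCover c (T ∪ Finset.univ.filter (fun v => w v - wo v = 0)) ∧
      ∀ S : Finset V, G.CBondCover c S →
        ∑ v ∈ T ∪ Finset.univ.filter (fun v => w v - wo v = 0), w v ≤ α * ∑ v ∈ S, w v := by
  set P := Finset.univ.filter (fun v => 0 < w v - wo v) with hP
  set D := Finset.univ.filter (fun v => w v - wo v = 0) with hD
  have hα0 : (0:ℝ) < α := lt_of_lt_of_le one_pos hα
  have hres : ∀ v, 0 ≤ w v - wo v := fun v => sub_nonneg.2 (hwo v).2
  have hcomp : (T ∪ D)ᶜ = P \ T := by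
    ext v
    simp only [Finset.mem_compl, Finset.mem_union, Finset.mem_sdiff, hP, hD,
      Finset.mem_filter, Finset.mem_univ, true_and, not_or]
    constructor
    · rintro ⟨hT, hDv⟩
      exact ⟨lt_of_le_of_ne (hres v) (Ne.symm hDv), hT⟩
    · rintro ⟨hpos, hT⟩
      exact ⟨hT, hpos.ne'⟩
  constructor
  · unfold Multigraph.CBondCover
    rw [hcomp]
    exact hTcov
  · intro S hS
    -- wo part
    have h1 : ∑ v ∈ T ∪ D, wo v ≤ α * ∑ v ∈ S, wo v := by
      have hle : ∑ v ∈ T ∪ D, wo v ≤ ∑ v : V, wo v :=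
        Finset.sum_le_sum_of_subset_of_nonneg (Finset.subset_univ _)
          (fun v _ _ => (hwo v).1)
      have := mul_le_mul_of_nonneg_left (hthin S hS) hα0.le
      have heq : α * ((1 / α) * ∑ v : V, wo v) = ∑ v : V, wo v := by
        field_simp
      rw [heq] at this
      linarith
    -- residual part
    have hcov : ¬ (G.induce (P \ (S ∩ P))).HasThetaMinor c := by
      intro hm
      apply hS
      refine G.hasThetaMinor_mono ?_ hm
      intro v hv
      rw [Finset.mem_sdiff] at hv
      rw [Finset.mem_compl]
      intro hvS
      exact hv.2 (Finset.mem_inter.2 ⟨hvS, hv.1⟩)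
    have h2 : ∑ v ∈ T, (w v - wo v) ≤ α * ∑ v ∈ S, (w v - wo v) := by
      refine le_trans (hTapx (S ∩ P) Finset.inter_subset_right hcov) ?_
      refine mul_le_mul_of_nonneg_left ?_ hα0.le
      exact Finset.sum_le_sum_of_subset_of_nonneg Finset.inter_subset_left
        (fun v _ _ => hres v)
    -- combine
    have hTD : Disjoint T D := by
      rw [Finset.disjoint_left]
      intro v hvT hvD
      have h1 := hTP hvT
      rw [hP, Finset.mem_filter] at h1
      rw [hD, Finset.mem_filter] at hvD
      exact h1.2.ne' hvD.2
    have hDzero : ∑ v ∈ D, (w v - wo v) = 0 := by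
      refine Finset.sum_eq_zero fun v hv => ?_
      rw [hD, Finset.mem_filter] at hv
      exact hv.2
    have hsplit : ∑ v ∈ T ∪ D, w v
        = ∑ v ∈ T ∪ D, wo v + ∑ v ∈ T, (w v - wo v) := by
      have : ∑ v ∈ T ∪ D, w v
          = ∑ v ∈ T ∪ D, wo v + ∑ v ∈ T ∪ D, (w v - wo v) := by
        rw [← Finset.sum_add_distrib]
        exact Finset.sum_congr rfl fun v _ => by ring
      rw [this]
      congr 1
      rw [Finset.sum_union hTD, hDzero, add_zero]
    have hSsplit : α * ∑ v ∈ S, w v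
        = α * ∑ v ∈ S, wo v + α * ∑ v ∈ S, (w v - wo v) := by
      rw [← mul_add, ← Finset.sum_add_distrib]
      congr 1
      exact Finset.sum_congr rfl fun v _ => by ring
    rw [hsplit, hSsplit]
    exact add_le_add h1 h2
end

section
/- Let H be an α-thin layer of weighted graph G = (V, E, w), let Q be a c-bond cover of G of minimum w-weight, let D be the set of vertices with w(v) = w°(v) (deleted vertices), and T a c-bond cover of G − D with residual weight w(T) − w°(T) ≤ α·opt, where opt is the minimum residual weight of a c-bond cover of G − D. Then w(T ∪ D) ≤ α·w(Q). -/
open Finset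

attribute [local instance] Classical.propDecidable

lemma induce_theta_mono {V : Type} [Fintype V] [DecidableEq V] (G : Multigraph V)
    {S S' : Finset V} (hSS : S ⊆ S') {c : ℕ}
    (h : (G.induce S).HasThetaMinor c) : (G.induce S').HasThetaMinor c := by
  obtain ⟨X, Y, hdisj, hX, hY, hcard⟩ := h
  have hadj : ∀ x y, (G.induce S).AdjV x y → (G.induce S').AdjV x y := by
    rintro x y ⟨e, he⟩
    exact ⟨⟨e.1, fun v hv => hSS (e.2 v hv)⟩, he⟩
  have hconn : ∀ Z : Finset V, (G.induce S).ConnectedSet Z →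
      (G.induce S').ConnectedSet Z := by
    rintro Z ⟨hne, hpath⟩
    refine ⟨hne, fun x hx y hy => ?_⟩
    have hle : ∀ a b, (G.induce S).AdjOn Z a b → (G.induce S').AdjOn Z a b :=
      fun a b ⟨ha, hb, hab⟩ => ⟨ha, hb, hadj a b hab⟩
    exact Relation.ReflTransGen.mono hle x y (hpath x hx y hy)
  refine ⟨X, Y, hdisj, hconn X hX, hconn Y hY, le_trans hcard ?_⟩
  apply Finset.card_le_card_of_injOn
    (fun e => (⟨e.1, fun v hv => hSS (e.2 v hv)⟩ : (G.induce S').E))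
  · intro e he
    simp only [Multigraph.crossing, Finset.mem_coe, Finset.mem_filter, Finset.mem_univ, true_and] at he ⊢
    exact Finset.mem_coe.mpr (Finset.mem_filter.mpr ⟨Finset.mem_univ _, he⟩)
  · intro e _ e' _ h
    exact Subtype.ext (congrArg Subtype.val h :)

/-- the key computation. With H an α-thin layer of G, Q an optimal
c-bond cover of G, D the deleted (tight) vertices, and T a c-bond cover of G − D of
residual weight ≤ α·opt, we get w(T ∪ D) ≤ α·w(Q). -/
theorem thin_layer_key_computation {V : Type} [Fintype V] [DecidableEq V]
    (G : Multigraph V) (c : ℕ) (w wo : V → ℝ) (α : ℝ) (hα : 1 ≤ α)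
    (hwo : ∀ v, 0 ≤ wo v ∧ wo v ≤ w v)
    (htight : ∃ v, wo v = w v)
    (hthin : ∀ S : Finset V, G.CBondCover c S →
      (1 / α) * ∑ v : V, wo v ≤ ∑ v ∈ S, wo v)
    (Q : Finset V) (hQ : G.CBondCover c Q)
    (hQopt : ∀ Q' : Finset V, G.CBondCover c Q' → ∑ v ∈ Q, w v ≤ ∑ v ∈ Q', w v)
    (T : Finset V)
    (hTD : T ⊆ (Finset.univ.filter (fun v => w v = wo v))ᶜ)
    (hTcov : ¬ (G.induce ((Finset.univ.filter (fun v => w v = wo v))ᶜ \ T)).HasThetaMinor c)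
    (hTapx : ∀ T' ⊆ (Finset.univ.filter (fun v => w v = wo v))ᶜ,
      ¬ (G.induce ((Finset.univ.filter (fun v => w v = wo v))ᶜ \ T')).HasThetaMinor c →
      ∑ v ∈ T, (w v - wo v) ≤ α * ∑ v ∈ T', (w v - wo v)) :
    ∑ v ∈ T ∪ Finset.univ.filter (fun v => w v = wo v), w v ≤ α * ∑ v ∈ Q, w v := by
  set D := Finset.univ.filter (fun v => w v = wo v) with hD
  have hα0 : (0:ℝ) < α := lt_of_lt_of_le one_pos hα
  -- T and D are disjoint
  have hTDdisj : Disjoint T D := by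
    rw [Finset.disjoint_right]
    intro v hvD hvT
    have := hTD hvT
    simp [Finset.mem_compl] at this
    exact this hvD
  -- apply hTapx with T' = Q ∩ Dᶜ
  have hT' : Q ∩ Dᶜ ⊆ Dᶜ := Finset.inter_subset_right
  have hcov : ¬ (G.induce (Dᶜ \ (Q ∩ Dᶜ))).HasThetaMinor c := by
    intro h
    apply hQ
    apply induce_theta_mono G ?_ h
    intro v hv
    simp only [Finset.mem_sdiff, Finset.mem_inter, Finset.mem_compl] at hv ⊢
    tauto
  have happrox := hTapx (Q ∩ Dᶜ) hT' hcov
  -- residual sum over Q ∩ Dᶜ equals residual sum over Q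
  have hresQ : ∑ v ∈ Q ∩ Dᶜ, (w v - wo v) = ∑ v ∈ Q, (w v - wo v) := by
    apply Finset.sum_subset Finset.inter_subset_left
    intro v hvQ hv
    have hvD : v ∈ D := by
      by_contra hvD
      exact hv (Finset.mem_inter.mpr ⟨hvQ, Finset.mem_compl.mpr hvD⟩)
    have : w v = wo v := (Finset.mem_filter.mp hvD).2
    linarith
  -- thinness: wo(V) ≤ α * wo(Q)
  have hthinQ : ∑ v : V, wo v ≤ α * ∑ v ∈ Q, wo v := by
    have := hthin Q hQ
    rw [div_mul_eq_mul_div, div_le_iff₀ hα0, one_mul] at this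
    linarith [mul_comm α (∑ v ∈ Q, wo v) ▸ this]
  -- wo(T ∪ D) ≤ wo(V)
  have hwoTD : ∑ v ∈ T ∪ D, wo v ≤ ∑ v : V, wo v := by
    apply Finset.sum_le_sum_of_subset_of_nonneg (Finset.subset_univ _)
    intro v _ _; exact (hwo v).1
  -- decompose LHS
  have hsplit : ∑ v ∈ T ∪ D, w v
      = ∑ v ∈ T ∪ D, wo v + ∑ v ∈ T, (w v - wo v) := by
    rw [Finset.sum_union hTDdisj, Finset.sum_union hTDdisj]
    have hDw : ∑ v ∈ D, w v = ∑ v ∈ D, wo v := by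
      apply Finset.sum_congr rfl
      intro v hv
      exact (Finset.mem_filter.mp hv).2
    rw [hDw, Finset.sum_sub_distrib]
    ring
  -- decompose RHS
  have hQsplit : ∑ v ∈ Q, w v = ∑ v ∈ Q, wo v + ∑ v ∈ Q, (w v - wo v) := by
    rw [Finset.sum_sub_distrib]; ring
  calc ∑ v ∈ T ∪ D, w v
      = ∑ v ∈ T ∪ D, wo v + ∑ v ∈ T, (w v - wo v) := hsplit
    _ ≤ α * ∑ v ∈ Q, wo v + α * ∑ v ∈ Q, (w v - wo v) := by
        have h1 : ∑ v ∈ T, (w v - wo v) ≤ α * ∑ v ∈ Q, (w v - wo v) := by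
          rw [← hresQ]; exact happrox
        linarith [le_trans hwoTD hthinQ]
    _ = α * ∑ v ∈ Q, w v := by rw [hQsplit]; ring
end

section
/- In the graph G constructed from a 2-connected planar graph H with an edge {s,t} and a (4 × k)-grid R glued between s and t (s adjacent to all (i,1), t adjacent to all (i,k), and the u-v edge {s,t} removed), every minimal s-t separator of Z := G[{s,t} ∪ R] is an H-minor cover of G, provided H has treewidth at least 5 and is not a minor of Z. -/
attribute [local instance] Classical.propDecidable

/-- Restriction of a simple graph to a vertex set (kept on the same vertex type,
all vertices outside `A` become isolated). -/
def SimpleGraph.restrict {V : Type} (G : SimpleGraph V) (A : Set V) : SimpleGraph V where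
  Adj x y := G.Adj x y ∧ x ∈ A ∧ y ∈ A
  symm := by
    constructor
    rintro x y ⟨h, hx, hy⟩
    exact ⟨h.symm, hy, hx⟩
  loopless := by
    constructor
    rintro x ⟨h, -, -⟩
    exact G.irrefl h

/-- Deletion of a vertex set. -/
def SimpleGraph.deleteSet {V : Type} (G : SimpleGraph V) (S : Set V) : SimpleGraph V :=
  G.restrict Sᶜ

/-- `H` is a minor of `G`: there are pairwise disjoint connected branch sets
`M a ⊆ V(G)`, one for each vertex `a` of `H`, with an edge of `G` between `M a`
and `M b` whenever `a` and `b` are adjacent in `H`. -/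
def SimpleGraph.IsMinorOf {W V : Type} (H : SimpleGraph W) (G : SimpleGraph V) : Prop :=
  ∃ M : W → Set V,
    (∀ a, (G.induce (M a)).Connected) ∧
    (Pairwise fun a b => Disjoint (M a) (M b)) ∧
    (∀ a b, H.Adj a b → ∃ x ∈ M a, ∃ y ∈ M b, G.Adj x y)

/-- `H` is 2-vertex-connected. -/
def TwoConnected {W : Type} [Fintype W] (H : SimpleGraph W) : Prop :=
  3 ≤ Fintype.card W ∧ ∀ v : W, (H.induce {u | u ≠ v}).Connected

/-- `H` admits a tree decomposition of width at most `t`. -/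
def HasTreewidthLE {W : Type} (H : SimpleGraph W) (t : ℕ) : Prop :=
  ∃ (ι : Type) (T : SimpleGraph ι), T.IsTree ∧ ∃ β : ι → Set W,
    (∀ v, ∃ i, v ∈ β i) ∧
    (∀ u v, H.Adj u v → ∃ i, u ∈ β i ∧ v ∈ β i) ∧
    (∀ v, (T.induce {i | v ∈ β i}).Connected) ∧
    (∀ i, (β i).ncard ≤ t + 1)

/-- `S` separates `s` from `t` in `Z`: every walk from `s` to `t` meets `S`. -/
def Separates {V : Type} (Z : SimpleGraph V) (s t : V) (S : Set V) : Prop :=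
  ∀ p : Z.Walk s t, ∃ v ∈ p.support, v ∈ S

/-- A minimal s-t separator. -/
def IsMinSeparator {V : Type} (Z : SimpleGraph V) (s t : V) (S : Set V) : Prop :=
  s ∉ S ∧ t ∉ S ∧ Separates Z s t S ∧ ∀ S' ⊂ S, ¬ Separates Z s t S'

/-- Vertex set of the glued graph G: the vertices of H together with the
(4 × k)-grid R = {0,1,2,3} × [k]. -/
abbrev GVert (W : Type) (k : ℕ) : Type := W ⊕ (Fin 4 × Fin k)

/-- The base relation of G: the edges of H except {s,t}; s joined to every (i,1)
and t joined to every (i,k); and cylindrical grid edges on R (rows modulo 4). -/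
def gRel {W : Type} [DecidableEq W] (H : SimpleGraph W) (s t : W) (k : ℕ) :
    GVert W k → GVert W k → Prop
  | Sum.inl a, Sum.inl b => H.Adj a b ∧ ¬(a = s ∧ b = t) ∧ ¬(a = t ∧ b = s)
  | Sum.inl a, Sum.inr (_, j) => (a = s ∧ (j : ℕ) = 0) ∨ (a = t ∧ (j : ℕ) = k - 1)
  | Sum.inr (i, j), Sum.inr (i', j') =>
      (j = j' ∧ i' = i + 1) ∨ (i = i' ∧ (j' : ℕ) = (j : ℕ) + 1)
  | _, _ => False

/-- The glued graph G. -/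
def Ggraph {W : Type} [DecidableEq W] (H : SimpleGraph W) (s t : W) (k : ℕ) :
    SimpleGraph (GVert W k) := SimpleGraph.fromRel (gRel H s t k)

/-- The vertex set {s, t} ∪ R inside G. -/
def Zset (W : Type) (s t : W) (k : ℕ) : Set (GVert W k) :=
  {x | x = Sum.inl s ∨ x = Sum.inl t ∨ ∃ p : Fin 4 × Fin k, x = Sum.inr p}

/-- The graph Z = G[{s,t} ∪ R]. -/
def Zgraph {W : Type} [DecidableEq W] (H : SimpleGraph W) (s t : W) (k : ℕ) :
    SimpleGraph (GVert W k) := (Ggraph H s t k).restrict (Zset W s t k)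

open SimpleGraph

namespace MinSepAux

variable {V : Type} {W : Type}

lemma walk_transfer {G G' : SimpleGraph V} (h : ∀ ⦃a b⦄, G.Adj a b → G'.Adj a b)
    {u v : V} (p : G.Walk u v) : ∃ q : G'.Walk u v, q.support = p.support := by
  induction p with
  | nil => exact ⟨.nil, rfl⟩
  | cons ha p ih =>
    obtain ⟨q, hq⟩ := ih
    exact ⟨.cons (h ha) q, by simp [hq]⟩

lemma exists_boundary {P : SimpleGraph V} {U : Set V} :
    ∀ {x y : V} (p : P.Walk x y), x ∈ U → y ∉ U →
      ∃ a b, a ∈ p.support ∧ b ∈ p.support ∧ a ∈ U ∧ b ∉ U ∧ P.Adj a b := by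
  intro x y p
  induction p with
  | nil => intro hx hy; exact absurd hx hy
  | @cons x z y ha p ih =>
    intro hx hy
    by_cases hz : z ∈ U
    · obtain ⟨a, b, h1, h2, h3, h4, h5⟩ := ih hz hy
      exact ⟨a, b, by simp [Walk.support_cons, h1], by simp [Walk.support_cons, h2], h3, h4, h5⟩
    · exact ⟨x, z, by simp, by simp [Walk.support_cons, Walk.start_mem_support], hx, hz, ha⟩

lemma induce_walk_out {P : SimpleGraph V} {N : Set V} :
    ∀ {a b : N} (_ : (P.induce N).Walk a b),
      ∃ p : P.Walk (a : V) (b : V), ∀ v ∈ p.support, v ∈ N := by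
  intro a b p
  induction p with
  | nil => exact ⟨.nil, fun v hv => by simp at hv; subst hv; exact Subtype.coe_prop _⟩
  | @cons a c b ha p ih =>
    obtain ⟨q, hq⟩ := ih
    refine ⟨.cons (comap_adj.mp ha) q, ?_⟩
    intro v hv
    rw [Walk.support_cons, List.mem_cons] at hv
    rcases hv with h | h
    · subst h; exact a.2
    · exact hq v h

lemma connected_walks {P : SimpleGraph V} {N : Set V} (h : (P.induce N).Connected)
    {x y : V} (hx : x ∈ N) (hy : y ∈ N) :
    ∃ p : P.Walk x y, ∀ v ∈ p.support, v ∈ N := by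
  obtain ⟨p⟩ := h.preconnected ⟨x, hx⟩ ⟨y, hy⟩
  exact induce_walk_out p

lemma reach_in_induce {P : SimpleGraph V} {N : Set V} :
    ∀ {x y : V} (p : P.Walk x y) (_ : ∀ v ∈ p.support, v ∈ N)
      (hx : x ∈ N) (hy : y ∈ N), (P.induce N).Reachable ⟨x, hx⟩ ⟨y, hy⟩ := by
  intro x y p
  induction p with
  | nil => intro _ hx hy; rfl
  | @cons x z y ha p ih =>
    intro hs hx hy
    have hz : z ∈ N := hs z (by simp)
    have h1 : (P.induce N).Adj ⟨x, hx⟩ ⟨z, hz⟩ := comap_adj.mpr ha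
    exact h1.reachable.trans
      (ih (fun v hv => hs v (by rw [Walk.support_cons]; exact List.mem_cons_of_mem _ hv)) hz hy)

lemma connected_of_hub {P : SimpleGraph V} {N : Set V} {v0 : V} (hv0 : v0 ∈ N)
    (h : ∀ x ∈ N, ∃ p : P.Walk x v0, ∀ v ∈ p.support, v ∈ N) :
    (P.induce N).Connected := by
  have hne : Nonempty N := ⟨⟨v0, hv0⟩⟩
  rw [SimpleGraph.connected_iff]
  refine ⟨fun x y => ?_, hne⟩
  obtain ⟨p, hp⟩ := h x x.2
  obtain ⟨q, hq⟩ := h y y.2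
  exact (reach_in_induce p hp x.2 hv0).trans (reach_in_induce q hq y.2 hv0).symm

lemma reach_avoid {P : SimpleGraph V} {U : Set V} :
    ∀ {x v0 : V} (p : P.Walk x v0),
      (∀ a ∈ U, ∀ b, P.Adj a b → b ∈ U ∨ b = v0) → x ∉ U →
      ∃ q : P.Walk x v0, (∀ v ∈ q.support, v ∉ U) ∧ (∀ v ∈ q.support, v ∈ p.support) := by
  intro x v0 p
  induction p with
  | nil => intro _ hx; exact ⟨.nil, by simpa using hx, by simp⟩
  | @cons x z y ha p ih =>
    intro hcut hx
    by_cases hz : z ∈ U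
    · rcases hcut z hz x ha.symm with h | h
      · exact absurd h hx
      · subst h
        exact ⟨.nil, by simpa using hx, by simp⟩
    · obtain ⟨q, hq1, hq2⟩ := ih hcut hz
      refine ⟨.cons ha q, ?_, ?_⟩
      · intro v hv
        rw [Walk.support_cons, List.mem_cons] at hv
        rcases hv with h | h
        · subst h; exact hx
        · exact hq1 v h
      · intro v hv
        rw [Walk.support_cons, List.mem_cons] at hv
        rw [Walk.support_cons, List.mem_cons]
        rcases hv with h | h
        · exact Or.inl h
        · exact Or.inr (hq2 v h)

/-- walk from inside `U` to `v0` has a prefix staying in `U ∪ {v0}`. -/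
lemma stay_in_cut {P : SimpleGraph V} {U : Set V} :
    ∀ {x v0 : V} (p : P.Walk x v0),
      (∀ a ∈ U, ∀ b, P.Adj a b → b ∈ U ∨ b = v0) → v0 ∉ U → x ∈ U →
      ∃ q : P.Walk x v0, (∀ v ∈ q.support, v ∈ U ∪ {v0}) ∧ (∀ v ∈ q.support, v ∈ p.support) := by
  intro x v0 p
  induction p with
  | nil => intro _ hv0 hx; exact absurd hx hv0
  | @cons x z y ha p ih =>
    intro hcut hv0 hx
    by_cases hz : z ∈ U
    · obtain ⟨q, hq1, hq2⟩ := ih hcut hv0 hz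
      refine ⟨.cons ha q, ?_, ?_⟩
      · intro v hv
        rw [Walk.support_cons, List.mem_cons] at hv
        rcases hv with h | h
        · subst h; exact Or.inl hx
        · exact hq1 v h
      · intro v hv
        rw [Walk.support_cons, List.mem_cons] at hv
        rw [Walk.support_cons, List.mem_cons]
        rcases hv with h | h
        · exact Or.inl h
        · exact Or.inr (hq2 v h)
    · rcases hcut x hx z ha with h | h
      · exact absurd h hz
      · subst h
        refine ⟨.cons ha .nil, ?_, ?_⟩
        · intro v hv
          simp only [Walk.support_cons, Walk.support_nil, List.mem_cons, List.mem_singleton] at hv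
          rcases hv with h | h
          · subst h; exact Or.inl hx
          · simp at h; subst h; exact Or.inr rfl
        · intro v hv
          simp only [Walk.support_cons, Walk.support_nil, List.mem_cons, List.mem_singleton] at hv
          rw [Walk.support_cons, List.mem_cons]
          rcases hv with h | h
          · exact Or.inl h
          · simp at h; subst h; exact Or.inr (Walk.start_mem_support p)

/-- propagate a predicate along a connected induced subgraph. -/
lemma propagate {H : SimpleGraph W} {A : Set W} (hc : (H.induce A).Connected)
    {Q : W → Prop} (hstep : ∀ a b, H.Adj a b → a ∈ A → b ∈ A → Q a → Q b)
    {a b : W} (ha : a ∈ A) (hb : b ∈ A) (hQ : Q a) : Q b := by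
  obtain ⟨p, hp⟩ := connected_walks hc ha hb
  clear hc ha hb
  have key : ∀ {x y : W} (p : H.Walk x y), (∀ v ∈ p.support, v ∈ A) → Q x → Q y := by
    intro x y p
    induction p with
    | nil => exact fun _ h => h
    | @cons x z y hxz p ih =>
      intro hp hQx
      have hx : x ∈ A := hp x (by simp)
      have hz : z ∈ A := hp z (by simp)
      exact ih (fun v hv => hp v (by rw [Walk.support_cons]; exact List.mem_cons_of_mem _ hv))
        (hstep x z hxz hx hz hQx)
  exact key p hp hQ


def IsModel {W V : Type} (H : SimpleGraph W) (D : SimpleGraph V) (M : W → Set V) : Prop :=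
  (∀ a, (D.induce (M a)).Connected) ∧ (Pairwise fun a b => Disjoint (M a) (M b)) ∧
  (∀ a b, H.Adj a b → ∃ x ∈ M a, ∃ y ∈ M b, D.Adj x y)

section Hside
variable [Fintype W] {H : SimpleGraph W}

lemma third (h2 : TwoConnected H) (u v : W) : ∃ w, w ≠ u ∧ w ≠ v := by
  by_contra h
  push_neg at h
  have hsub : (Finset.univ : Finset W) ⊆ {u, v} := by
    intro w _
    rcases Classical.em (w = u) with h1 | h1
    · simp [h1]
    · simp [h w h1]
  have := Finset.card_le_card hsub
  have h2' := h2.1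
  rw [← Finset.card_univ] at h2'
  have : (3 : ℕ) ≤ ({u, v} : Finset W).card := le_trans h2' this
  have hle : ({u, v} : Finset W).card ≤ 2 := Finset.card_insert_le _ _ |>.trans (by simp)
  omega

lemma hconn (h2 : TwoConnected H) : H.Connected := by
  rw [SimpleGraph.connected_iff]
  constructor
  · intro u v
    rcases Classical.em (u = v) with h | h
    · subst h; rfl
    · obtain ⟨w, hwu, hwv⟩ := third h2 u v
      obtain ⟨p, _⟩ := connected_walks (h2.2 w) (show u ∈ {x | x ≠ w} from Ne.symm hwu)
        (show v ∈ {x | x ≠ w} from Ne.symm hwv)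
      exact ⟨p⟩
  · have h3 := h2.1
    have : 0 < Fintype.card W := by omega
    exact Fintype.card_pos_iff.mp this

lemma huniv (h2 : TwoConnected H) : (H.induce (Set.univ : Set W)).Connected := by
  have hc := hconn h2
  rw [SimpleGraph.connected_iff]
  refine ⟨fun x y => ?_, ⟨⟨Classical.choice (by rw [SimpleGraph.connected_iff] at hc; exact hc.2), trivial⟩⟩⟩
  obtain ⟨p⟩ := hc.preconnected x y
  exact reach_in_induce p (fun v _ => trivial) trivial trivial

lemma neighbor (h2 : TwoConnected H) (a : W) : ∃ b, H.Adj a b := by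
  obtain ⟨u, hu, _⟩ := third h2 a a
  obtain ⟨p⟩ := (hconn h2).preconnected a u
  cases p with
  | nil => exact absurd rfl hu
  | cons ha _ => exact ⟨_, ha⟩

lemma cut_dichotomy {V : Type} (h2 : TwoConnected H)
    {D : SimpleGraph V} {M : W → Set V} (hM : IsModel H D M)
    {U : Set V} {v0 : V} (hv0 : v0 ∉ U)
    (hcut : ∀ a ∈ U, ∀ b, D.Adj a b → b ∈ U ∨ b = v0) :
    (∃ N, IsModel H D N ∧ ∀ a, N a ⊆ U ∪ {v0}) ∨
    (∃ N, IsModel H D N ∧ (∀ a, N a ⊆ M a) ∧ ∀ a, Disjoint (N a) U) := by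
  obtain ⟨hMc, hMd, hMe⟩ := hM
  have subU : ∀ a, v0 ∉ M a → ∀ x ∈ M a, x ∈ U → M a ⊆ U := by
    intro a hva x hxM hxU y hyM
    by_contra hyU
    obtain ⟨p, hp⟩ := connected_walks (hMc a) hxM hyM
    obtain ⟨u1, u2, _, hu2, hU1, hU2, hadj⟩ := exists_boundary p hxU hyU
    rcases hcut u1 hU1 u2 hadj with h | h
    · exact hU2 h
    · exact hva (h ▸ hp u2 hu2)
  have step : ∀ a b, H.Adj a b → v0 ∉ M a → v0 ∉ M b → M a ⊆ U → M b ⊆ U := by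
    intro a b hab hva hvb hMa
    obtain ⟨x, hx, y, hy, hadj⟩ := hMe a b hab
    rcases hcut x (hMa hx) y hadj with h | h
    · exact subU b hvb y hy h
    · exact absurd (h ▸ hy) hvb
  by_cases hA : ∃ a, v0 ∉ M a ∧ ∃ x ∈ M a, x ∈ U
  · left
    obtain ⟨a0, hva0, x0, hx0, hx0U⟩ := hA
    have ha0U : M a0 ⊆ U := subU a0 hva0 x0 hx0 hx0U
    by_cases hc : ∃ c, v0 ∈ M c
    · obtain ⟨c, hvc⟩ := hc
      have hvnot : ∀ b, b ≠ c → v0 ∉ M b := by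
        intro b hbc hvb
        exact Set.disjoint_left.mp (hMd hbc) hvb hvc
      have ha0c : a0 ≠ c := fun h => hva0 (h ▸ hvc)
      have hallU : ∀ b, b ≠ c → M b ⊆ U := by
        intro b hbc
        exact propagate (h2.2 c)
          (fun a b hab ha hb => step a b hab (hvnot a ha) (hvnot b hb)) ha0c hbc ha0U
      classical
      refine ⟨Function.update M c ((M c ∩ U) ∪ {v0}), ⟨?_, ?_, ?_⟩, ?_⟩
      · intro b
        by_cases hbc : b = c
        · subst hbc
          rw [Function.update_self]
          refine connected_of_hub (Or.inr rfl) ?_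
          rintro x (⟨hxM, hxU⟩ | hx)
          · obtain ⟨p, hp⟩ := connected_walks (hMc b) hxM hvc
            obtain ⟨q, hq1, hq2⟩ := stay_in_cut p hcut hv0 hxU
            refine ⟨q, fun v hv => ?_⟩
            rcases hq1 v hv with h | h
            · exact Or.inl ⟨hp v (hq2 v hv), h⟩
            · exact Or.inr h
          · simp only [Set.mem_singleton_iff] at hx
            subst hx
            exact ⟨.nil, by simp⟩
        · rw [Function.update_of_ne hbc]; exact hMc b
      · have hsub : ∀ b, Function.update M c ((M c ∩ U) ∪ {v0}) b ⊆ M b := by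
          intro b
          by_cases hbc : b = c
          · subst hbc
            rw [Function.update_self]
            rintro x (⟨h, _⟩ | h)
            · exact h
            · simp only [Set.mem_singleton_iff] at h; exact h ▸ hvc
          · rw [Function.update_of_ne hbc]
        exact fun a b hab => (hMd hab).mono (hsub a) (hsub b)
      · intro a b hab
        obtain ⟨x, hx, y, hy, hadj⟩ := hMe a b hab
        have key : ∀ a' b' x' y', H.Adj a' b' → x' ∈ M a' → y' ∈ M b' → D.Adj x' y' →
            x' ∈ Function.update M c ((M c ∩ U) ∪ {v0}) a' := by
          intro a' b' x' y' hab' hx' hy' hadj'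
          by_cases hac : a' = c
          · subst hac
            rw [Function.update_self]
            have hbc : b' ≠ a' := hab'.ne.symm
            have : y' ∈ U := hallU b' (by exact hbc) hy'
            rcases hcut y' this x' hadj'.symm with h | h
            · exact Or.inl ⟨hx', h⟩
            · exact Or.inr h
          · rw [Function.update_of_ne hac]; exact hx'
        exact ⟨x, key a b x y hab hx hy hadj, y, key b a y x hab.symm hy hx hadj.symm, hadj⟩
      · intro b
        by_cases hbc : b = c
        · subst hbc
          rw [Function.update_self]
          rintro x (⟨_, h⟩ | h)
          · exact Or.inl h
          · exact Or.inr h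
        · rw [Function.update_of_ne hbc]
          exact fun x hx => Or.inl (hallU b hbc hx)
    · push_neg at hc
      have hallU : ∀ b, M b ⊆ U := by
        intro b
        exact propagate (huniv h2) (fun a b hab _ _ => step a b hab (hc a) (hc b))
          trivial trivial ha0U
      exact ⟨M, ⟨hMc, hMd, hMe⟩, fun a x hx => Or.inl (hallU a hx)⟩
  · right
    push_neg at hA
    have notU : ∀ a b x y, H.Adj a b → x ∈ M a → y ∈ M b → D.Adj x y → x ∉ U := by
      intro a b x y hab hx hy hadj hxU
      by_cases hva : v0 ∈ M a
      · rcases hcut x hxU y hadj with h | h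
        · by_cases hvb : v0 ∈ M b
          · exact Set.disjoint_left.mp (hMd hab.ne) hva hvb
          · exact hA b hvb y hy h
        · exact Set.disjoint_left.mp (hMd hab.ne) hva (h ▸ hy)
      · exact hA a hva x hx hxU
    refine ⟨fun a => M a \ U, ⟨?_, ?_, ?_⟩, fun a => Set.diff_subset,
      fun a => Set.disjoint_sdiff_left⟩
    · intro a
      by_cases hva : v0 ∈ M a
      · show (D.induce (M a \ U)).Connected
        refine connected_of_hub ⟨hva, hv0⟩ ?_
        rintro x ⟨hxM, hxU⟩
        obtain ⟨p, hp⟩ := connected_walks (hMc a) hxM hva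
        obtain ⟨q, hq1, hq2⟩ := reach_avoid p hcut hxU
        exact ⟨q, fun v hv => ⟨hp v (hq2 v hv), hq1 v hv⟩⟩
      · have hda : Disjoint (M a) U :=
          Set.disjoint_left.mpr (fun {x} hx hxU => hA a hva x hx hxU)
        show (D.induce (M a \ U)).Connected
        rw [hda.sdiff_eq_left]
        exact hMc a
    · exact fun a b hab => (hMd hab).mono Set.diff_subset Set.diff_subset
    · intro a b hab
      obtain ⟨x, hx, y, hy, hadj⟩ := hMe a b hab
      exact ⟨x, ⟨hx, notU a b x y hab hx hy hadj⟩, y, ⟨hy, notU b a y x hab.symm hy hx hadj.symm⟩,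
        hadj⟩

end Hside

lemma deleteSet_walk_support {V : Type} {Q : SimpleGraph V} {S : Set V} :
    ∀ {x y : V} (p : (Q.deleteSet S).Walk x y), x ∉ S → ∀ v ∈ p.support, v ∉ S := by
  intro x y p
  induction p with
  | nil => intro hx v hv; simp at hv; subst hv; exact hx
  | @cons x z y ha p ih =>
    intro hx v hv
    rw [Walk.support_cons, List.mem_cons] at hv
    rcases hv with h | h
    · subst h; exact hx
    · exact ih ha.2.2 v h

lemma reach_endpoint {V : Type} {Q : SimpleGraph V} {u x : V} (h : Q.Reachable u x) :
    x = u ∨ ∃ y, Q.Adj x y := by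
  obtain ⟨p⟩ := h
  cases p.reverse with
  | nil => exact Or.inl rfl
  | cons ha q => exact Or.inr ⟨_, ha⟩

section Gfacts
variable {W : Type} [DecidableEq W] {H : SimpleGraph W} {s t : W} {k : ℕ}

lemma gadj_inl_inl {a b : W} (h : (Ggraph H s t k).Adj (Sum.inl a) (Sum.inl b)) :
    H.Adj a b ∧ ¬(a = s ∧ b = t) ∧ ¬(a = t ∧ b = s) := by
  rw [Ggraph, SimpleGraph.fromRel_adj] at h
  rcases h.2 with h' | h'
  · exact h'
  · exact ⟨h'.1.symm, fun ⟨e1, e2⟩ => h'.2.2 ⟨e2, e1⟩, fun ⟨e1, e2⟩ => h'.2.1 ⟨e2, e1⟩⟩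

lemma gadj_inr_inl {pq : Fin 4 × Fin k} {a : W}
    (h : (Ggraph H s t k).Adj (Sum.inr pq) (Sum.inl a)) : a = s ∨ a = t := by
  obtain ⟨i, j⟩ := pq
  rw [Ggraph, SimpleGraph.fromRel_adj] at h
  rcases h.2 with h' | h'
  · exact h'.elim
  · rcases h' with ⟨h1, _⟩ | ⟨h1, _⟩
    · exact Or.inl h1
    · exact Or.inr h1

lemma mem_Zset_inr (p : Fin 4 × Fin k) : (Sum.inr p : GVert W k) ∈ Zset W s t k :=
  Or.inr (Or.inr ⟨p, rfl⟩)

lemma mem_Zset_inl {a : W} (h : (Sum.inl a : GVert W k) ∈ Zset W s t k) : a = s ∨ a = t := by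
  rcases h with h | h | ⟨p, h⟩
  · exact Or.inl (Sum.inl.inj h)
  · exact Or.inr (Sum.inl.inj h)
  · exact absurd h Sum.inl_ne_inr

lemma not_mem_Zset {x : GVert W k} (h : x ∉ Zset W s t k) :
    ∃ w : W, x = Sum.inl w ∧ w ≠ s ∧ w ≠ t := by
  cases x with
  | inl w =>
    refine ⟨w, rfl, ?_, ?_⟩
    · rintro rfl; exact h (Or.inl rfl)
    · rintro rfl; exact h (Or.inr (Or.inl rfl))
  | inr p => exact absurd (mem_Zset_inr p) h

end Gfacts
end MinSepAux


open MinSepAux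

/-- if H is a 2-connected graph of treewidth at least 5 containing
the edge {s,t} and H is not a minor of Z, then every minimal s-t separator of
Z = G[{s,t} ∪ R] (a subset of R) is an H-minor cover of the glued graph G.
(Planarity of H plays no role in the claim and is not formalized.) -/
theorem minimal_separator_is_minor_cover {W : Type} [Fintype W] [DecidableEq W]
    (H : SimpleGraph W) (s t : W) (hst : H.Adj s t) (k : ℕ) (hk : 5 < k)
    (h2conn : TwoConnected H)
    (htw : ¬ HasTreewidthLE H 4)
    (hnm : ¬ H.IsMinorOf (Zgraph H s t k))
    (S : Set (GVert W k))
    (hSR : ∀ x ∈ S, ∃ p : Fin 4 × Fin k, x = Sum.inr p)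
    (hsep : IsMinSeparator (Zgraph H s t k) (Sum.inl s) (Sum.inl t) S) :
    ¬ H.IsMinorOf ((Ggraph H s t k).deleteSet S) := by
  obtain ⟨hsS, htS, hsepp, -⟩ := hsep
  set G := Ggraph H s t k with hG
  set Z := Zgraph H s t k with hZ
  set D := G.deleteSet S with hD
  set Zd := Z.deleteSet S with hZd
  -- basic adjacency conversions
  have hDadj : ∀ {x y}, D.Adj x y → G.Adj x y ∧ x ∉ S ∧ y ∉ S := fun h => h
  have hZdle : ∀ ⦃x y⦄, Zd.Adj x y → Z.Adj x y := fun x y h => h.1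
  have hZadj : ∀ {x y}, Z.Adj x y → G.Adj x y ∧ x ∈ Zset W s t k ∧ y ∈ Zset W s t k :=
    fun h => h
  have hmkZd : ∀ {x y}, G.Adj x y → x ∈ Zset W s t k → y ∈ Zset W s t k → x ∉ S → y ∉ S →
      Zd.Adj x y := fun h h1 h2 h3 h4 => ⟨⟨h, h1, h2⟩, h3, h4⟩
  -- the two sides
  set A' : Set (GVert W k) := {x | Zd.Reachable (Sum.inl s) x} with hA'
  set B' : Set (GVert W k) := {x | Zd.Reachable (Sum.inl t) x} with hB'
  have hsA : (Sum.inl s : GVert W k) ∈ A' := Reachable.refl _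
  have htB : (Sum.inl t : GVert W k) ∈ B' := Reachable.refl _
  have hsep' : ¬ Zd.Reachable (Sum.inl s) (Sum.inl t) := by
    intro h
    obtain ⟨p⟩ := h
    obtain ⟨q, hq⟩ := walk_transfer hZdle p
    obtain ⟨v, hv, hvS⟩ := hsepp q
    rw [hq] at hv
    exact deleteSet_walk_support p hsS v hv hvS
  have htA : (Sum.inl t : GVert W k) ∉ A' := hsep'
  have hsB : (Sum.inl s : GVert W k) ∉ B' := fun h => hsep' h.symm
  have hendA : ∀ x ∈ A', x = Sum.inl s ∨ (x ∈ Zset W s t k ∧ x ∉ S) := by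
    intro x hx
    rcases reach_endpoint hx with h | ⟨y, hy⟩
    · exact Or.inl h
    · exact Or.inr ⟨hy.1.2.1, hy.2.1⟩
  have hendB : ∀ x ∈ B', x = Sum.inl t ∨ (x ∈ Zset W s t k ∧ x ∉ S) := by
    intro x hx
    rcases reach_endpoint hx with h | ⟨y, hy⟩
    · exact Or.inl h
    · exact Or.inr ⟨hy.1.2.1, hy.2.1⟩
  set Asep : Set (GVert W k) := A' \ {Sum.inl s} with hAsep
  set Bsep : Set (GVert W k) := B' \ {Sum.inl t} with hBsep
  set U0 : Set (GVert W k) :=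
    {x | (∃ p : Fin 4 × Fin k, x = Sum.inr p) ∧ x ∉ S ∧ x ∉ A' ∧ x ∉ B'} with hU0
  -- shapes
  have hAform : ∀ x ∈ Asep, ∃ p : Fin 4 × Fin k, x = Sum.inr p ∧ x ∉ S := by
    rintro x ⟨hxA, hxs⟩
    rcases hendA x hxA with h | ⟨hZ1, hS1⟩
    · exact absurd h hxs
    · cases x with
      | inl w =>
        rcases mem_Zset_inl hZ1 with rfl | rfl
        · exact absurd rfl hxs
        · exact absurd hxA htA
      | inr p => exact ⟨p, rfl, hS1⟩
  have hBform : ∀ x ∈ Bsep, ∃ p : Fin 4 × Fin k, x = Sum.inr p ∧ x ∉ S := by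
    rintro x ⟨hxB, hxt⟩
    rcases hendB x hxB with h | ⟨hZ1, hS1⟩
    · exact absurd h hxt
    · cases x with
      | inl w =>
        rcases mem_Zset_inl hZ1 with rfl | rfl
        · exact absurd hxB hsB
        · exact absurd rfl hxt
      | inr p => exact ⟨p, rfl, hS1⟩
  -- cut properties
  have hcutA : ∀ a ∈ Asep, ∀ b, D.Adj a b → b ∈ Asep ∨ b = Sum.inl s := by
    intro x hx y hadj
    obtain ⟨p, rfl, hxS⟩ := hAform x hx
    obtain ⟨hGxy, -, hyS⟩ := hDadj hadj
    by_cases hyZ : y ∈ Zset W s t k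
    · have hyA : y ∈ A' := hx.1.trans
        (hmkZd hGxy (mem_Zset_inr p) hyZ hxS hyS).reachable
      by_cases hys : y = Sum.inl s
      · exact Or.inr hys
      · exact Or.inl ⟨hyA, hys⟩
    · obtain ⟨w, rfl, hws, hwt⟩ := not_mem_Zset hyZ
      rcases gadj_inr_inl hGxy with h | h
      · exact absurd h hws
      · exact absurd h hwt
  have hcutB : ∀ a ∈ Bsep, ∀ b, D.Adj a b → b ∈ Bsep ∨ b = Sum.inl t := by
    intro x hx y hadj
    obtain ⟨p, rfl, hxS⟩ := hBform x hx
    obtain ⟨hGxy, -, hyS⟩ := hDadj hadj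
    by_cases hyZ : y ∈ Zset W s t k
    · have hyB : y ∈ B' := hx.1.trans
        (hmkZd hGxy (mem_Zset_inr p) hyZ hxS hyS).reachable
      by_cases hyt : y = Sum.inl t
      · exact Or.inr hyt
      · exact Or.inl ⟨hyB, hyt⟩
    · obtain ⟨w, rfl, hws, hwt⟩ := not_mem_Zset hyZ
      rcases gadj_inr_inl hGxy with h | h
      · exact absurd h hws
      · exact absurd h hwt
  have hcutU : ∀ a ∈ U0, ∀ b, D.Adj a b → b ∈ U0 ∨ b = Sum.inl s := by
    rintro x ⟨⟨p, rfl⟩, hxS, hxA, hxB⟩ y hadj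
    obtain ⟨hGxy, -, hyS⟩ := hDadj hadj
    by_cases hyZ : y ∈ Zset W s t k
    · have hzd := hmkZd hGxy (mem_Zset_inr p) hyZ hxS hyS
      have hyA : y ∉ A' := fun h => hxA (h.trans hzd.symm.reachable)
      have hyB : y ∉ B' := fun h => hxB (h.trans hzd.symm.reachable)
      cases y with
      | inl w =>
        rcases mem_Zset_inl hyZ with rfl | rfl
        · exact absurd hsA hyA
        · exact absurd htB hyB
      | inr q => exact Or.inl ⟨⟨q, rfl⟩, hyS, hyA, hyB⟩
    · obtain ⟨w, rfl, hws, hwt⟩ := not_mem_Zset hyZ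
      rcases gadj_inr_inl hGxy with h | h
      · exact absurd h hws
      · exact absurd h hwt
  -- any model inside Zset yields a minor of Z
  have hZminor : ∀ N : W → Set (GVert W k), IsModel H D N →
      (∀ a, N a ⊆ Zset W s t k) → False := by
    intro N ⟨hNc, hNd, hNe⟩ hNZ
    apply hnm
    refine ⟨N, fun a => ?_, hNd, fun a b hab => ?_⟩
    · refine (hNc a).mono ?_
      intro u v h
      have h' := hDadj (SimpleGraph.comap_adj.mp h)
      exact SimpleGraph.comap_adj.mpr ⟨h'.1, hNZ a u.2, hNZ a v.2⟩
    · obtain ⟨x, hx, y, hy, hadj⟩ := hNe a b hab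
      exact ⟨x, hx, y, hy, ⟨(hDadj hadj).1, hNZ a hx, hNZ b hy⟩⟩
  -- main argument
  rintro ⟨M, hMc, hMd, hMe⟩
  have hAsub : Asep ∪ {Sum.inl s} ⊆ Zset W s t k := by
    rintro x (hx | hx)
    · obtain ⟨p, rfl, -⟩ := hAform x hx
      exact mem_Zset_inr p
    · simp only [Set.mem_singleton_iff] at hx
      subst hx; exact Or.inl rfl
  have hBsub : Bsep ∪ {Sum.inl t} ⊆ Zset W s t k := by
    rintro x (hx | hx)
    · obtain ⟨p, rfl, -⟩ := hBform x hx
      exact mem_Zset_inr p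
    · simp only [Set.mem_singleton_iff] at hx
      subst hx; exact Or.inr (Or.inl rfl)
  have hUsub : U0 ∪ {Sum.inl s} ⊆ Zset W s t k := by
    rintro x (⟨⟨p, rfl⟩, -⟩ | hx)
    · exact mem_Zset_inr p
    · simp only [Set.mem_singleton_iff] at hx
      subst hx; exact Or.inl rfl
  rcases cut_dichotomy h2conn ⟨hMc, hMd, hMe⟩ (fun h => h.2 rfl) hcutA with
    ⟨N, hN, hNs⟩ | ⟨M1, hM1, hsub1, hdisj1⟩
  · exact hZminor N hN (fun a => (hNs a).trans hAsub)
  rcases cut_dichotomy h2conn hM1 (fun h => h.2 rfl) hcutB with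
    ⟨N, hN, hNs⟩ | ⟨M2, hM2, hsub2, hdisj2⟩
  · exact hZminor N hN (fun a => (hNs a).trans hBsub)
  have hsU0 : (Sum.inl s : GVert W k) ∉ U0 := by
    rintro ⟨⟨p, hp⟩, -⟩
    exact Sum.inl_ne_inr hp
  rcases cut_dichotomy h2conn hM2 hsU0 hcutU with
    ⟨N, hN, hNs⟩ | ⟨M3, hM3, hsub3, hdisj3⟩
  · exact hZminor N hN (fun a => (hNs a).trans hUsub)
  obtain ⟨h3c, h3d, h3e⟩ := hM3
  -- branch sets avoid S
  have hS3 : ∀ a, ∀ x ∈ M3 a, x ∉ S := by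
    intro a x hx
    obtain ⟨b, hab⟩ := neighbor h2conn a
    obtain ⟨u, hu, y, hy, hadj⟩ := h3e a b hab
    by_cases hxu : x = u
    · subst hxu; exact (hDadj hadj).2.1
    · obtain ⟨p, hp⟩ := connected_walks (h3c a) hx hu
      cases p with
      | nil => exact absurd rfl hxu
      | cons ha q => exact (hDadj ha).2.1
  -- classification: branch sets live on the H side
  have hinl : ∀ a, ∀ x ∈ M3 a, ∃ w, x = Sum.inl w := by
    intro a x hx
    cases x with
    | inl w => exact ⟨w, rfl⟩
    | inr p =>
      exfalso
      have hxS : (Sum.inr p : GVert W k) ∉ S := hS3 a _ hx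
      have hxM1 : (Sum.inr p : GVert W k) ∈ M1 a := hsub2 a (hsub3 a hx)
      have hxM2 : (Sum.inr p : GVert W k) ∈ M2 a := hsub3 a hx
      have hxA : (Sum.inr p : GVert W k) ∉ Asep :=
        Set.disjoint_left.mp (hdisj1 a) hxM1
      have hxB : (Sum.inr p : GVert W k) ∉ Bsep :=
        Set.disjoint_left.mp (hdisj2 a) hxM2
      have hxU : (Sum.inr p : GVert W k) ∉ U0 :=
        Set.disjoint_left.mp (hdisj3 a) hx
      by_cases hA1 : (Sum.inr p : GVert W k) ∈ A'
      · exact hxA ⟨hA1, fun h => Sum.inr_ne_inl h⟩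
      by_cases hB1 : (Sum.inr p : GVert W k) ∈ B'
      · exact hxB ⟨hB1, fun h => Sum.inr_ne_inl h⟩
      exact hxU ⟨⟨p, rfl⟩, hxS, hA1, hB1⟩
  -- extract the vertex map
  have hf : ∀ a, ∃ w, Sum.inl w ∈ M3 a := by
    intro a
    obtain ⟨⟨x, hx⟩⟩ := (h3c a).nonempty
    obtain ⟨w, rfl⟩ := hinl a x hx
    exact ⟨w, hx⟩
  choose f hfmem using hf
  have hinj : Function.Injective f := by
    intro a b hab
    by_contra hne
    exact Set.disjoint_left.mp (h3d hne) (hfmem a) (hab ▸ hfmem b)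
  have hbij : Function.Bijective f := Finite.injective_iff_bijective.mp hinj
  have hkey : ∀ a x, x ∈ M3 a → x = Sum.inl (f a) := by
    intro a x hx
    obtain ⟨w, rfl⟩ := hinl a x hx
    obtain ⟨c, rfl⟩ := hbij.2 w
    by_cases hca : c = a
    · subst hca; rfl
    · exact (Set.disjoint_left.mp (h3d hca) (hfmem c) hx).elim
  have hedge : ∀ a b, H.Adj a b →
      H.Adj (f a) (f b) ∧ ¬(f a = s ∧ f b = t) ∧ ¬(f a = t ∧ f b = s) := by
    intro a b hab
    obtain ⟨x, hx, y, hy, hadj⟩ := h3e a b hab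
    rw [hkey a x hx, hkey b y hy] at hadj
    exact gadj_inl_inl (hDadj hadj).1
  -- permutation / orbit argument
  let σ : Equiv.Perm W := Equiv.ofBijective f hbij
  have hσ : ∀ w, σ w = f w := fun _ => rfl
  have horb : ∀ m, H.Adj ((σ ^ m) s) ((σ ^ m) t) := by
    intro m
    induction m with
    | zero => simpa using hst
    | succ n ih =>
      rw [pow_succ', Equiv.Perm.mul_apply, Equiv.Perm.mul_apply]
      exact (hedge _ _ ih).1
  have hn : 0 < orderOf σ := orderOf_pos σ
  have h1 : σ ^ orderOf σ = 1 := pow_orderOf_eq_one σ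
  have hm := horb (orderOf σ - 1)
  refine (hedge _ _ hm).2.1 ⟨?_, ?_⟩
  · show σ ((σ ^ (orderOf σ - 1)) s) = s
    rw [← Equiv.Perm.mul_apply, ← pow_succ',
      show orderOf σ - 1 + 1 = orderOf σ from by omega, h1]
    rfl
  · show σ ((σ ^ (orderOf σ - 1)) t) = t
    rw [← Equiv.Perm.mul_apply, ← pow_succ',
      show orderOf σ - 1 + 1 = orderOf σ from by omega, h1]
    rfl
end
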